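/- arXiv:2306.15395 — 4 statements merged into one kernel-verified Lean document; each statement's English description precedes it below -/
import Mathlib

section
/- Let n ≥ 3. Any set of edges on a vertex set of size n that forms a single deque with respect to some vertex order has at most 3n − 6 edges. -/
namespace DequePaper

/-- The four possible types of an edge in a deque: head-head, tail-tail,
head-tail and tail-head. -/
inductive EdgeType : Type
  | hh | tt | ht | th
  deriving DecidableEq

variable {V : Type} [LinearOrder V]

/-- Edges `(u,v)` and `(u',v')` (with `u ≺ v`, `u' ≺ v'`) cross:
`u ≺ u' ≺ v ≺ v'`. -/
def Cross (e e' : V × V) : Prop :=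
  e.1 < e'.1 ∧ e'.1 < e.2 ∧ e.2 < e'.2

/-- Edges `(u,v)` and `(u',v')` nest: `u ≺ u' ≺ v' ≺ v`. -/
def Nest (e e' : V × V) : Prop :=
  e.1 < e'.1 ∧ e'.1 < e'.2 ∧ e'.2 < e.2

/-- A set of edges is a stack iff no two of its edges cross. -/
def IsStack (E : Set (V × V)) : Prop :=
  ∀ e ∈ E, ∀ e' ∈ E, ¬ Cross e e'

/-- A set of edges is a queue iff no two of its edges nest. -/
def IsQueue (E : Set (V × V)) : Prop :=
  ∀ e ∈ E, ∀ e' ∈ E, ¬ Nest e e'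

/-- A set of edges is a rique iff it contains no three edges
`(a,a')`, `(b,b')`, `(c,c')` with `a ≺ b ≺ c ≺ b'`, `b' ≺ a'` and `b' ≺ c'`. -/
def IsRique (E : Set (V × V)) : Prop :=
  ¬ ∃ a a' b b' c c' : V, (a, a') ∈ E ∧ (b, b') ∈ E ∧ (c, c') ∈ E ∧
      a < b ∧ b < c ∧ c < b' ∧ b' < a' ∧ b' < c'

/-- The extension of the vertex order: all vertices, followed by the
wrap points (modelled by natural numbers), each wrap point lying strictly
after every vertex. -/
abbrev Ext (V : Type) := V ⊕ₗ ℕ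

/-- A vertex, viewed in the extended order. -/
def vtx (v : V) : Ext V := toLex (Sum.inl v)

/-- A wrap point, viewed in the extended order. -/
def wpt (m : ℕ) : Ext V := toLex (Sum.inr m)

/-- The interval of an edge in the upper family: `[u,v]` for an hh edge,
`[u,p(e)]` for an ht edge, `[v,p(e)]` for a th edge, nothing for a tt edge. -/
def upperIv (typ : V × V → EdgeType) (wrap : V × V → ℕ) (e : V × V) :
    Option (Ext V × Ext V) :=
  match typ e with
  | EdgeType.hh => some (vtx e.1, vtx e.2)
  | EdgeType.ht => some (vtx e.1, wpt (wrap e))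
  | EdgeType.th => some (vtx e.2, wpt (wrap e))
  | EdgeType.tt => none

/-- The interval of an edge in the lower family: `[u,v]` for a tt edge,
`[v,p(e)]` for an ht edge, `[u,p(e)]` for a th edge, nothing for an hh edge. -/
def lowerIv (typ : V × V → EdgeType) (wrap : V × V → ℕ) (e : V × V) :
    Option (Ext V × Ext V) :=
  match typ e with
  | EdgeType.tt => some (vtx e.1, vtx e.2)
  | EdgeType.ht => some (vtx e.2, wpt (wrap e))
  | EdgeType.th => some (vtx e.1, wpt (wrap e))
  | EdgeType.hh => none

/-- Two intervals `[x,y]` and `[x',y']` of the extended order cross: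
`x ≺ x' ≺ y ≺ y'`. -/
def IvCross (i i' : Ext V × Ext V) : Prop :=
  i.1 < i'.1 ∧ i'.1 < i.2 ∧ i.2 < i'.2

/-- A family of intervals (one for each edge of `E` on which `iv` is defined)
is pairwise non-crossing. -/
def FamilyNonCrossing (E : Set (V × V)) (iv : V × V → Option (Ext V × Ext V)) : Prop :=
  ∀ e ∈ E, ∀ e' ∈ E, ∀ i ∈ iv e, ∀ i' ∈ iv e', ¬ IvCross i i'

/-- `typ` and `wrap` form a witnessing type assignment for the edge set `E`
being a deque: wrap points are assigned injectively to the ht/th edges, and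
both the upper and the lower families of intervals are pairwise non-crossing. -/
def IsDequeWitness (E : Set (V × V)) (typ : V × V → EdgeType) (wrap : V × V → ℕ) : Prop :=
  (∀ e ∈ E, ∀ e' ∈ E, (typ e = EdgeType.ht ∨ typ e = EdgeType.th) →
      (typ e' = EdgeType.ht ∨ typ e' = EdgeType.th) → wrap e = wrap e' → e = e') ∧
  FamilyNonCrossing E (upperIv typ wrap) ∧
  FamilyNonCrossing E (lowerIv typ wrap)

/-- A set of edges is a deque iff it admits a witnessing type assignment. -/
def IsDeque (E : Set (V × V)) : Prop :=
  ∃ typ wrap, IsDequeWitness E typ wrap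

/-- The edges of a graph `G`, written as ordered pairs with respect to the
vertex order given by the order embedding `f` into `ℕ`. -/
def orderedEdges {W : Type} (G : SimpleGraph W) (f : W ↪ ℕ) : Set (ℕ × ℕ) :=
  {p | ∃ u v, G.Adj u v ∧ f u = p.1 ∧ f v = p.2 ∧ p.1 < p.2}

/-- `G` admits a layout with `k` pages, each page satisfying `P`:
a vertex order (injection into `ℕ`) together with a partition of the
edges into `k` parts (given by the colouring `c`), each part satisfying `P`. -/
def HasLayout {W : Type} (G : SimpleGraph W) (k : ℕ)
    (P : Set (ℕ × ℕ) → Prop) : Prop :=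
  ∃ (f : W ↪ ℕ) (c : ℕ × ℕ → Fin k),
    ∀ i : Fin k, P {p | p ∈ orderedEdges G f ∧ c p = i}

/-- `G` admits a `k`-stack layout. -/
def HasStackLayout {W : Type} (G : SimpleGraph W) (k : ℕ) : Prop :=
  HasLayout G k IsStack

/-- `G` admits a `k`-queue layout. -/
def HasQueueLayout {W : Type} (G : SimpleGraph W) (k : ℕ) : Prop :=
  HasLayout G k IsQueue

/-- `G` admits a `k`-rique layout. -/
def HasRiqueLayout {W : Type} (G : SimpleGraph W) (k : ℕ) : Prop :=
  HasLayout G k IsRique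

/-- `G` admits a `k`-deque layout. -/
def HasDequeLayout {W : Type} (G : SimpleGraph W) (k : ℕ) : Prop :=
  HasLayout G k IsDeque

/-- The stack-number of `G`. -/
noncomputable def stackNumber {W : Type} (G : SimpleGraph W) : ℕ :=
  sInf {k | HasStackLayout G k}

/-- The queue-number of `G`. -/
noncomputable def queueNumber {W : Type} (G : SimpleGraph W) : ℕ :=
  sInf {k | HasQueueLayout G k}

/-- The rique-number of `G`. -/
noncomputable def riqueNumber {W : Type} (G : SimpleGraph W) : ℕ :=
  sInf {k | HasRiqueLayout G k}

/-- The deque-number of `G`. -/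
noncomputable def dequeNumber {W : Type} (G : SimpleGraph W) : ℕ :=
  sInf {k | HasDequeLayout G k}

/-- the underlying (sorted) pair of a wrap edge -/
def und (w : ℕ × ℕ) : ℕ × ℕ := (min w.1 w.2, max w.1 w.2)

/-- A pairwise non-crossing family of diagonals of the polygon on points
`lo..hi` (excluding the closing pair `(lo,hi)`) has at most `hi - lo - 2`
elements. -/
lemma diag_strict : ∀ (fuel lo hi : ℕ) (D : Finset (ℕ × ℕ)),
    hi ≤ lo + fuel →
    (∀ p ∈ D, lo ≤ p.1 ∧ p.1 + 2 ≤ p.2 ∧ p.2 ≤ hi ∧ p ≠ (lo, hi)) →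
    (∀ p ∈ D, ∀ q ∈ D, ¬ Cross p q) →
    D = ∅ ∨ D.card + lo + 2 ≤ hi := by
  intro fuel
  induction fuel with
  | zero =>
    intro lo hi D hfuel hmem _
    left
    rw [Finset.eq_empty_iff_forall_notMem]
    intro p hp
    have := hmem p hp
    omega
  | succ n ih =>
    intro lo hi D hfuel hmem hnc
    rcases D.eq_empty_or_nonempty with h | hne
    · exact Or.inl h
    right
    obtain ⟨xy, hxyD, hmin⟩ := D.exists_min_image (fun p => p.2 - p.1) hne
    obtain ⟨hlox, hxy2, hyhi, hne_lohi⟩ := hmem xy hxyD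
    set x := xy.1 with hx
    set y := xy.2 with hy
    -- no element of D has x+1 as an endpoint
    have hend : ∀ q ∈ D, q.1 ≠ x + 1 ∧ q.2 ≠ x + 1 := by
      intro q hq
      obtain ⟨hq1, hq2, hq3, _⟩ := hmem q hq
      constructor
      · intro h1
        have hspan := hmin q hq
        by_cases hv : q.2 ≤ y
        · omega
        · exact hnc xy hxyD q hq ⟨by omega, by omega, by omega⟩
      · intro h2
        exact hnc q hq xy hxyD ⟨by omega, by omega, by omega⟩
    set f : ℕ → ℕ := fun t => if t ≤ x then t else t - 1 with hfdef
    have hmono : ∀ a b : ℕ, a ≤ b → f a ≤ f b := by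
      intro a b h; simp only [hfdef]; split_ifs <;> omega
    have hrefl : ∀ a b : ℕ, f a < f b → a < b := by
      intro a b h
      by_contra hc
      push_neg at hc
      exact absurd (hmono b a hc) (by omega)
    have hinj : ∀ a b : ℕ, a ≠ x + 1 → b ≠ x + 1 → f a = f b → a = b := by
      intro a b ha hb h; simp only [hfdef] at h; split_ifs at h <;> omega
    have hxlo : lo ≤ x := hlox
    by_cases hy2 : y = x + 2
    · -- remove the point x+1 together with the "ear" xy
      set D' := (D.erase xy).image (Prod.map f f) with hD'
      have hcard : D'.card = (D.erase xy).card := by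
        apply Finset.card_image_of_injOn
        intro p hp q hq hpq
        have hpD := Finset.mem_of_mem_erase hp
        have hqD := Finset.mem_of_mem_erase hq
        have hep := hend p hpD
        have heq := hend q hqD
        have h1 : f p.1 = f q.1 := congrArg Prod.fst hpq
        have h2 : f p.2 = f q.2 := congrArg Prod.snd hpq
        exact Prod.ext (hinj _ _ hep.1 heq.1 h1) (hinj _ _ hep.2 heq.2 h2)
      have hres := ih lo (hi - 1) D' (by omega)
        (by
          intro p' hp'
          obtain ⟨q, hq, rfl⟩ := Finset.mem_image.1 hp'
          have hqD := Finset.mem_of_mem_erase hq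
          have hqne : q ≠ xy := Finset.ne_of_mem_erase hq
          obtain ⟨ha1, ha2, ha3, _⟩ := hmem q hqD
          obtain ⟨he1, he2⟩ := hend q hqD
          have hq12 : q.1 ≠ x ∨ q.2 ≠ x + 2 := by
            by_contra hc
            push_neg at hc
            exact hqne (Prod.ext (hc.1) (by omega))
          refine ⟨?_, ?_, ?_, ?_⟩
          · simp only [Prod.map_fst, hfdef]; split_ifs <;> omega
          · simp only [Prod.map_fst, Prod.map_snd, hfdef]
            rcases hq12 with hc | hc <;> (split_ifs <;> omega)
          · simp only [Prod.map_snd, hfdef]; split_ifs <;> omega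
          · intro heq
            have h1 : f q.1 = lo := congrArg Prod.fst heq
            have h2 : f q.2 = hi - 1 := congrArg Prod.snd heq
            simp only [hfdef] at h1 h2
            apply (hmem q hqD).2.2.2
            refine Prod.ext ?_ ?_ <;>
              · simp only
                split_ifs at h1 h2 <;> omega)
        (by
          intro p' hp' q' hq' hcr
          obtain ⟨p, hp, rfl⟩ := Finset.mem_image.1 hp'
          obtain ⟨q, hq, rfl⟩ := Finset.mem_image.1 hq'
          obtain ⟨c1, c2, c3⟩ := hcr
          simp only [Prod.map_fst, Prod.map_snd] at c1 c2 c3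
          exact hnc p (Finset.mem_of_mem_erase hp) q (Finset.mem_of_mem_erase hq)
            ⟨hrefl _ _ c1, hrefl _ _ c2, hrefl _ _ c3⟩)
      have hcard2 : (D.erase xy).card = D.card - 1 := Finset.card_erase_of_mem hxyD
      have hDpos : 1 ≤ D.card := Finset.card_pos.2 hne
      have hhi3 : lo + 3 ≤ hi := by
        have hxy : x ≠ lo ∨ y ≠ hi := by
          by_contra hc; push_neg at hc; exact hne_lohi (Prod.ext hc.1 hc.2)
        rcases hxy with h | h <;> omega
      rcases hres with h | h
      · -- D' empty means D.erase xy empty, so D.card = 1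
        have : (D.erase xy).card = 0 := by
          rw [← hcard, h]; simp
        omega
      · omega
    · -- y ≥ x+3 : every element has span ≥ 3
      have hy3 : x + 3 ≤ y := by omega
      set D' := D.image (Prod.map f f) with hD'
      have hcard : D'.card = D.card := by
        apply Finset.card_image_of_injOn
        intro p hp q hq hpq
        have hep := hend p hp
        have heq := hend q hq
        have h1 : f p.1 = f q.1 := congrArg Prod.fst hpq
        have h2 : f p.2 = f q.2 := congrArg Prod.snd hpq
        exact Prod.ext (hinj _ _ hep.1 heq.1 h1) (hinj _ _ hep.2 heq.2 h2)
      have hres := ih lo (hi - 1) D' (by omega)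
        (by
          intro p' hp'
          obtain ⟨q, hq, rfl⟩ := Finset.mem_image.1 hp'
          obtain ⟨ha1, ha2, ha3, _⟩ := hmem q hq
          obtain ⟨he1, he2⟩ := hend q hq
          have hspan := hmin q hq
          refine ⟨?_, ?_, ?_, ?_⟩
          · simp only [Prod.map_fst, hfdef]; split_ifs <;> omega
          · simp only [Prod.map_fst, Prod.map_snd, hfdef]; split_ifs <;> omega
          · simp only [Prod.map_snd, hfdef]; split_ifs <;> omega
          · intro heq
            have h1 : f q.1 = lo := congrArg Prod.fst heq
            have h2 : f q.2 = hi - 1 := congrArg Prod.snd heq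
            simp only [hfdef] at h1 h2
            apply (hmem q hq).2.2.2
            refine Prod.ext ?_ ?_ <;>
              · simp only
                split_ifs at h1 h2 <;> omega)
        (by
          intro p' hp' q' hq' hcr
          obtain ⟨p, hp, rfl⟩ := Finset.mem_image.1 hp'
          obtain ⟨q, hq, rfl⟩ := Finset.mem_image.1 hq'
          obtain ⟨c1, c2, c3⟩ := hcr
          simp only [Prod.map_fst, Prod.map_snd] at c1 c2 c3
          exact hnc p hp q hq ⟨hrefl _ _ c1, hrefl _ _ c2, hrefl _ _ c3⟩)
      rcases hres with h | h
      · exfalso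
        have : D'.Nonempty := hne.image _
        rw [h] at this
        exact Finset.not_nonempty_empty this
      · omega

/-- Version of `diag_strict` allowing the full pair `(lo,hi)`. -/
lemma diag_full (lo hi : ℕ) (D : Finset (ℕ × ℕ))
    (hmem : ∀ p ∈ D, lo ≤ p.1 ∧ p.1 + 2 ≤ p.2 ∧ p.2 ≤ hi)
    (hnc : ∀ p ∈ D, ∀ q ∈ D, ¬ Cross p q) :
    D = ∅ ∨ D.card + lo + 1 ≤ hi := by
  rcases D.eq_empty_or_nonempty with h | hne
  · exact Or.inl h
  right
  have hres := diag_strict hi lo hi (D.erase (lo, hi)) (by omega)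
    (by
      intro p hp
      obtain ⟨h1, h2, h3⟩ := hmem p (Finset.mem_of_mem_erase hp)
      exact ⟨h1, h2, h3, Finset.ne_of_mem_erase hp⟩)
    (fun p hp q hq => hnc p (Finset.mem_of_mem_erase hp) q (Finset.mem_of_mem_erase hq))
  by_cases h0 : (lo, hi) ∈ D
  · have hc : (D.erase (lo, hi)).card = D.card - 1 := Finset.card_erase_of_mem h0
    have hDpos : 1 ≤ D.card := Finset.card_pos.2 hne
    have hlohi : lo + 2 ≤ hi := (hmem _ h0).2.1
    rcases hres with h | h
    · have : (D.erase (lo, hi)).card = 0 := by rw [h]; simp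
      omega
    · omega
  · rw [Finset.erase_eq_of_notMem h0] at hres
    rcases hres with h | h
    · exact absurd h (Finset.nonempty_iff_ne_empty.1 hne)
    · omega

/-- window decomposition: non-crossing diagonals avoiding strict containment of
points of `S` -/
lemma windows : ∀ (m : ℕ) (S : Finset ℕ) (D : Finset (ℕ × ℕ)) (lo hi : ℕ),
    S.card ≤ m →
    (∀ p ∈ D, lo ≤ p.1 ∧ p.1 + 2 ≤ p.2 ∧ p.2 ≤ hi) →
    (∀ p ∈ D, ∀ q ∈ D, ¬ Cross p q) →
    (∀ s ∈ S, lo < s ∧ s < hi) →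
    (∀ p ∈ D, ∀ s ∈ S, ¬ (p.1 < s ∧ s < p.2)) →
    D.card + S.card + lo + 1 ≤ hi ∨ (D = ∅ ∧ S = ∅) := by
  intro m
  induction m with
  | zero =>
    intro S D lo hi hScard hmem hnc _ _
    have hS : S = ∅ := Finset.card_eq_zero.1 (by omega)
    subst hS
    rcases diag_full lo hi D hmem hnc with h | h
    · exact Or.inr ⟨h, rfl⟩
    · left; simpa using h
  | succ m ih =>
    intro S D lo hi hScard hmem hnc hS havoid
    rcases S.eq_empty_or_nonempty with hSe | hSne
    · subst hSe
      rcases diag_full lo hi D hmem hnc with h | h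
      · exact Or.inr ⟨h, rfl⟩
      · left; simpa using h
    left
    set s := S.max' hSne with hsdef
    have hsmem : s ∈ S := S.max'_mem hSne
    have hsmax : ∀ t ∈ S, t ≤ s := fun t ht => S.le_max' t ht
    obtain ⟨hlos, hshi⟩ := hS s hsmem
    set DL := D.filter (fun p => p.2 ≤ s) with hDL
    set DR := D.filter (fun p => ¬ p.2 ≤ s) with hDR
    have hsplit : DL.card + DR.card = D.card :=
      Finset.card_filter_add_card_filter_not (s := D) (fun p => p.2 ≤ s)
    have hDRfact : ∀ p ∈ DR, s ≤ p.1 := by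
      intro p hp
      rw [hDR, Finset.mem_filter] at hp
      have := havoid p hp.1 s hsmem
      omega
    have hL := ih (S.erase s) DL lo s
      (by have := Finset.card_erase_of_mem hsmem; have := Finset.card_pos.2 hSne; omega)
      (by
        intro p hp
        rw [hDL, Finset.mem_filter] at hp
        obtain ⟨h1, h2, _⟩ := hmem p hp.1
        exact ⟨h1, h2, hp.2⟩)
      (fun p hp q hq => hnc p (Finset.mem_of_mem_filter p hp) q (Finset.mem_of_mem_filter q hq))
      (by
        intro t ht
        have htS := Finset.mem_of_mem_erase ht
        have htne := Finset.ne_of_mem_erase ht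
        have := hS t htS
        have := hsmax t htS
        omega)
      (fun p hp t ht => havoid p (Finset.mem_of_mem_filter p hp) t (Finset.mem_of_mem_erase ht))
    have hR := diag_full s hi DR
      (by
        intro p hp
        obtain ⟨h1, h2, h3⟩ := hmem p (Finset.mem_of_mem_filter p hp)
        exact ⟨hDRfact p hp, h2, h3⟩)
      (fun p hp q hq => hnc p (Finset.mem_of_mem_filter p hp) q (Finset.mem_of_mem_filter q hq))
    have hScard1 : 1 ≤ S.card := Finset.card_pos.2 hSne
    have hSecard : (S.erase s).card = S.card - 1 := Finset.card_erase_of_mem hsmem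
    have hDL2 : DL.card + S.card + lo ≤ s := by
      rcases hL with h | ⟨h1, h2⟩
      · omega
      · have e1 : DL.card = 0 := by rw [h1]; simp
        have e2 : (S.erase s).card = 0 := by rw [h2]; simp
        omega
    have hDR2 : DR.card + s + 1 ≤ hi := by
      rcases hR with h | h
      · have : DR.card = 0 := by rw [h]; simp
        omega
      · exact h
    omega

/-- chain in the componentwise order has a top element -/
lemma chain_top (W : Finset (ℕ × ℕ)) (hne : W.Nonempty)
    (hchain : ∀ w ∈ W, ∀ w' ∈ W,
      (w.1 ≤ w'.1 ∧ w.2 ≤ w'.2) ∨ (w'.1 ≤ w.1 ∧ w'.2 ≤ w.2)) :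
    ∃ wm ∈ W, ∀ w ∈ W, w.1 ≤ wm.1 ∧ w.2 ≤ wm.2 := by
  obtain ⟨wm, hm, hmax⟩ := W.exists_max_image (fun w => w.1 + w.2) hne
  refine ⟨wm, hm, fun w hw => ?_⟩
  rcases hchain w hw wm hm with h | h
  · exact h
  · have := hmax w hw; omega

lemma chain_bot (W : Finset (ℕ × ℕ)) (hne : W.Nonempty)
    (hchain : ∀ w ∈ W, ∀ w' ∈ W,
      (w.1 ≤ w'.1 ∧ w.2 ≤ w'.2) ∨ (w'.1 ≤ w.1 ∧ w'.2 ≤ w.2)) :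
    ∃ wn ∈ W, ∀ w ∈ W, wn.1 ≤ w.1 ∧ wn.2 ≤ w.2 := by
  obtain ⟨wn, hm, hmin⟩ := W.exists_min_image (fun w => w.1 + w.2) hne
  refine ⟨wn, hm, fun w hw => ?_⟩
  rcases hchain w hw wn hm with h | h
  · have := hmin w hw; omega
  · exact h

/-- a chain of distinct pairs has cardinality < (#first coords) + (#second coords) -/
lemma chain_card : ∀ (m : ℕ) (W : Finset (ℕ × ℕ)), W.card ≤ m → W.Nonempty →
    (∀ w ∈ W, ∀ w' ∈ W,
      (w.1 ≤ w'.1 ∧ w.2 ≤ w'.2) ∨ (w'.1 ≤ w.1 ∧ w'.2 ≤ w.2)) →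
    W.card + 1 ≤ (W.image Prod.fst).card + (W.image Prod.snd).card := by
  intro m
  induction m with
  | zero =>
    intro W hcard hne _
    exact absurd (Finset.card_pos.2 hne) (by omega)
  | succ m ih =>
    intro W hcard hne hchain
    obtain ⟨wm, hwm, htop⟩ := chain_top W hne hchain
    set W' := W.erase wm with hW'
    have hcard' : W'.card = W.card - 1 := Finset.card_erase_of_mem hwm
    have hWpos : 1 ≤ W.card := Finset.card_pos.2 hne
    rcases W'.eq_empty_or_nonempty with hWe | hWne
    · have h1 : W.card = 1 := by
        have : W'.card = 0 := by rw [hWe]; simp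
        omega
      have hk : 1 ≤ (W.image Prod.fst).card := Finset.card_pos.2 (hne.image _)
      have hl : 1 ≤ (W.image Prod.snd).card := Finset.card_pos.2 (hne.image _)
      omega
    obtain ⟨wn, hwn, htop'⟩ := chain_top W' hWne
      (fun w hw w' hw' => hchain w (Finset.mem_of_mem_erase hw) w' (Finset.mem_of_mem_erase hw'))
    have hne' : wn ≠ wm := Finset.ne_of_mem_erase hwn
    have hle := htop wn (Finset.mem_of_mem_erase hwn)
    have hstrict : wn.1 < wm.1 ∨ wn.2 < wm.2 := by
      by_contra hc
      push_neg at hc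
      exact hne' (Prod.ext (by omega) (by omega))
    have hih := ih W' (by omega) hWne
      (fun w hw w' hw' => hchain w (Finset.mem_of_mem_erase hw) w' (Finset.mem_of_mem_erase hw'))
    rcases hstrict with hst | hst
    · -- first coordinate of wm is new
      have himg : W.image Prod.fst = insert wm.1 (W'.image Prod.fst) := by
        ext a
        simp only [Finset.mem_image, Finset.mem_insert]
        constructor
        · rintro ⟨w, hw, rfl⟩
          by_cases hwwm : w = wm
          · left; rw [hwwm]
          · right; exact ⟨w, Finset.mem_erase.2 ⟨hwwm, hw⟩, rfl⟩
        · rintro (rfl | ⟨w, hw, rfl⟩)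
          · exact ⟨wm, hwm, rfl⟩
          · exact ⟨w, Finset.mem_of_mem_erase hw, rfl⟩
      have hnotmem : wm.1 ∉ W'.image Prod.fst := by
        rw [Finset.mem_image]
        rintro ⟨w, hw, hweq⟩
        have := htop' w hw
        omega
      have hk : (W.image Prod.fst).card = (W'.image Prod.fst).card + 1 := by
        rw [himg, Finset.card_insert_of_notMem hnotmem]
      have hl : (W'.image Prod.snd).card ≤ (W.image Prod.snd).card :=
        Finset.card_le_card (Finset.image_subset_image (Finset.erase_subset _ _))
      omega
    · have himg : W.image Prod.snd = insert wm.2 (W'.image Prod.snd) := by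
        ext a
        simp only [Finset.mem_image, Finset.mem_insert]
        constructor
        · rintro ⟨w, hw, rfl⟩
          by_cases hwwm : w = wm
          · left; rw [hwwm]
          · right; exact ⟨w, Finset.mem_erase.2 ⟨hwwm, hw⟩, rfl⟩
        · rintro (rfl | ⟨w, hw, rfl⟩)
          · exact ⟨wm, hwm, rfl⟩
          · exact ⟨w, Finset.mem_of_mem_erase hw, rfl⟩
      have hnotmem : wm.2 ∉ W'.image Prod.snd := by
        rw [Finset.mem_image]
        rintro ⟨w, hw, hweq⟩
        have := htop' w hw
        omega
      have hl : (W.image Prod.snd).card = (W'.image Prod.snd).card + 1 := by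
        rw [himg, Finset.card_insert_of_notMem hnotmem]
      have hk : (W'.image Prod.fst).card ≤ (W.image Prod.fst).card :=
        Finset.card_le_card (Finset.image_subset_image (Finset.erase_subset _ _))
      omega

/-- the set of "side" pairs -/
lemma sides_bound (N : ℕ) (T : Finset (ℕ × ℕ))
    (hT : ∀ p ∈ T, p.1 < p.2 ∧ p.2 < N ∧ ¬ p.1 + 2 ≤ p.2) :
    T.card ≤ N - 1 := by
  have hsub : T ⊆ (Finset.range (N - 1)).image (fun i => (i, i + 1)) := by
    intro p hp
    obtain ⟨h1, h2, h3⟩ := hT p hp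
    rw [Finset.mem_image]
    exact ⟨p.1, Finset.mem_range.2 (by omega), Prod.ext rfl (by omega)⟩
  calc T.card ≤ _ := Finset.card_le_card hsub
    _ ≤ (Finset.range (N - 1)).card := Finset.card_image_le
    _ = N - 1 := Finset.card_range _

/-- the case of no wrap edges: two disjoint non-crossing families -/
lemma base_count (N : ℕ) (A B : Finset (ℕ × ℕ)) (hN : 3 ≤ N)
    (hA : ∀ p ∈ A, p.1 < p.2 ∧ p.2 < N)
    (hB : ∀ p ∈ B, p.1 < p.2 ∧ p.2 < N)
    (hAnc : ∀ p ∈ A, ∀ q ∈ A, ¬ Cross p q)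
    (hBnc : ∀ p ∈ B, ∀ q ∈ B, ¬ Cross p q)
    (hdisj : Disjoint A B) :
    A.card + B.card ≤ 3 * N - 6 := by
  classical
  set P : ℕ × ℕ → Prop := fun p => p.1 + 2 ≤ p.2 with hP
  set nsA := A.filter P with hnsA
  set sA := A.filter (fun p => ¬ P p) with hsA
  set nsB := B.filter P with hnsB
  set sB := B.filter (fun p => ¬ P p) with hsB
  have hsplitA : nsA.card + sA.card = A.card :=
    Finset.card_filter_add_card_filter_not (s := A) P
  have hsplitB : nsB.card + sB.card = B.card :=
    Finset.card_filter_add_card_filter_not (s := B) P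
  -- sides
  have hsides : sA.card + sB.card ≤ N - 1 := by
    have hdisjs : Disjoint sA sB :=
      Finset.disjoint_of_subset_left (Finset.filter_subset _ _)
        (Finset.disjoint_of_subset_right (Finset.filter_subset _ _) hdisj)
    have := sides_bound N (sA ∪ sB) (by
      intro p hp
      rcases Finset.mem_union.1 hp with h | h
      · have h' := Finset.mem_filter.1 h
        exact ⟨(hA p h'.1).1, (hA p h'.1).2, h'.2⟩
      · have h' := Finset.mem_filter.1 h
        exact ⟨(hB p h'.1).1, (hB p h'.1).2, h'.2⟩)
    rwa [Finset.card_union_of_disjoint hdisjs] at this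
  -- split off the full pair
  set dA := nsA.filter (fun p => ¬ p = (0, N - 1)) with hdA
  set fA := nsA.filter (fun p => p = (0, N - 1)) with hfA
  set dB := nsB.filter (fun p => ¬ p = (0, N - 1)) with hdB
  set fB := nsB.filter (fun p => p = (0, N - 1)) with hfB
  have hsplitA2 : fA.card + dA.card = nsA.card :=
    Finset.card_filter_add_card_filter_not (s := nsA) _
  have hsplitB2 : fB.card + dB.card = nsB.card :=
    Finset.card_filter_add_card_filter_not (s := nsB) _
  have hfA1 : fA.card ≤ 1 := by
    apply Finset.card_le_one.2
    intro a ha b hb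
    rw [hfA, Finset.mem_filter] at ha hb
    rw [ha.2, hb.2]
  have hfB1 : fB.card ≤ 1 := by
    apply Finset.card_le_one.2
    intro a ha b hb
    rw [hfB, Finset.mem_filter] at ha hb
    rw [ha.2, hb.2]
  have hfAB : fA.card = 0 ∨ fB.card = 0 := by
    by_contra hc
    push_neg at hc
    obtain ⟨a, ha⟩ := Finset.card_pos.1 (by omega : 0 < fA.card)
    obtain ⟨b, hb⟩ := Finset.card_pos.1 (by omega : 0 < fB.card)
    rw [hfA, Finset.mem_filter] at ha
    rw [hfB, Finset.mem_filter] at hb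
    have haA : a ∈ A := Finset.mem_of_mem_filter a ha.1
    have hbB : b ∈ B := Finset.mem_of_mem_filter b hb.1
    rw [ha.2] at haA
    rw [hb.2] at hbB
    exact Finset.disjoint_left.1 hdisj haA hbB
  -- strict diagonals
  have hdAb : dA = ∅ ∨ dA.card + 0 + 2 ≤ N - 1 := by
    apply diag_strict N 0 (N - 1) dA (by omega)
    · intro p hp
      rw [hdA, Finset.mem_filter] at hp
      have h1 := Finset.mem_filter.1 hp.1
      have := hA p h1.1
      exact ⟨by omega, h1.2, by omega, hp.2⟩
    · intro p hp q hq
      exact hAnc p (Finset.mem_of_mem_filter p (Finset.mem_of_mem_filter p hp))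
        q (Finset.mem_of_mem_filter q (Finset.mem_of_mem_filter q hq))
  have hdBb : dB = ∅ ∨ dB.card + 0 + 2 ≤ N - 1 := by
    apply diag_strict N 0 (N - 1) dB (by omega)
    · intro p hp
      rw [hdB, Finset.mem_filter] at hp
      have h1 := Finset.mem_filter.1 hp.1
      have := hB p h1.1
      exact ⟨by omega, h1.2, by omega, hp.2⟩
    · intro p hp q hq
      exact hBnc p (Finset.mem_of_mem_filter p (Finset.mem_of_mem_filter p hp))
        q (Finset.mem_of_mem_filter q (Finset.mem_of_mem_filter q hq))
  have hdAc : dA.card ≤ N - 3 := by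
    rcases hdAb with h | h
    · rw [h]; simp
    · omega
  have hdBc : dB.card ≤ N - 3 := by
    rcases hdBb with h | h
    · rw [h]; simp
    · omega
  omega

/-- The main counting lemma for deque structures. -/
lemma main_count : ∀ (c N : ℕ) (A B W : Finset (ℕ × ℕ)),
    W.card ≤ c → 3 ≤ N →
    (∀ p ∈ A, p.1 < p.2 ∧ p.2 < N) →
    (∀ p ∈ B, p.1 < p.2 ∧ p.2 < N) →
    (∀ p ∈ A, ∀ q ∈ A, ¬ Cross p q) →
    (∀ p ∈ B, ∀ q ∈ B, ¬ Cross p q) →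
    (∀ w ∈ W, w.1 ≠ w.2 ∧ w.1 < N ∧ w.2 < N) →
    (∀ w ∈ W, ∀ w' ∈ W,
      (w.1 ≤ w'.1 ∧ w.2 ≤ w'.2) ∨ (w'.1 ≤ w.1 ∧ w'.2 ≤ w.2)) →
    (∀ p ∈ A, ∀ w ∈ W, ¬ (p.1 < w.1 ∧ w.1 < p.2)) →
    (∀ p ∈ B, ∀ w ∈ W, ¬ (p.1 < w.2 ∧ w.2 < p.2)) →
    Disjoint A B →
    (∀ w ∈ W, und w ∉ A) →
    (∀ w ∈ W, und w ∉ B) →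
    (∀ w ∈ W, ∀ w' ∈ W, und w = und w' → w = w') →
    A.card + B.card + W.card ≤ 3 * N - 6 := by
  intro c
  induction c with
  | zero =>
    intro N A B W hc hN hA hB hAnc hBnc hW hchain hAav hBav hdisj hWA hWB hWinj
    have hWe : W = ∅ := Finset.card_eq_zero.1 (by omega)
    have := base_count N A B hN hA hB hAnc hBnc hdisj
    rw [hWe]
    simpa using this
  | succ c ih =>
    intro N A B W hc hN hA hB hAnc hBnc hW hchain hAav hBav hdisj hWA hWB hWinj
    rcases W.eq_empty_or_nonempty with hWe | hWne
    · have := base_count N A B hN hA hB hAnc hBnc hdisj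
      rw [hWe]
      simpa using this
    obtain ⟨wm, hwm, htop⟩ := chain_top W hWne hchain
    obtain ⟨wn, hwn, hbot⟩ := chain_bot W hWne hchain
    obtain ⟨hwmne, hwm1, hwm2⟩ := hW wm hwm
    obtain ⟨hwnne, hwn1, hwn2⟩ := hW wn hwn
    have hWcard : 1 ≤ W.card := Finset.card_pos.2 hWne
    -- generic facts about erasing
    have hchain' : ∀ w ∈ W.erase wm, ∀ w' ∈ W.erase wm,
        (w.1 ≤ w'.1 ∧ w.2 ≤ w'.2) ∨ (w'.1 ≤ w.1 ∧ w'.2 ≤ w.2) :=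
      fun w hw w' hw' => hchain w (Finset.mem_of_mem_erase hw) w' (Finset.mem_of_mem_erase hw')
    have hchainn' : ∀ w ∈ W.erase wn, ∀ w' ∈ W.erase wn,
        (w.1 ≤ w'.1 ∧ w.2 ≤ w'.2) ∨ (w'.1 ≤ w.1 ∧ w'.2 ≤ w.2) :=
      fun w hw w' hw' => hchain w (Finset.mem_of_mem_erase hw) w' (Finset.mem_of_mem_erase hw')
    by_cases h1 : wm.1 = N - 1
    · -- swap top wrap to B as (wm.2, N-1)
      have hτ : wm.2 < N - 1 := by omega
      have hundm : und wm = (wm.2, N - 1) := by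
        rw [und, h1]
        exact Prod.ext (min_eq_right (by omega)) (max_eq_left (by omega))
      have hfresh : (wm.2, N - 1) ∉ B := hundm ▸ hWB wm hwm
      have hkey := ih N A (insert (wm.2, N - 1) B) (W.erase wm)
        (by rw [Finset.card_erase_of_mem hwm]; omega) hN hA
        (by
          intro p hp
          rcases Finset.mem_insert.1 hp with rfl | hp'
          · exact ⟨by omega, by omega⟩
          · exact hB p hp')
        hAnc
        (by
          intro p hp q hq
          rcases Finset.mem_insert.1 hp with rfl | hp' <;>
            rcases Finset.mem_insert.1 hq with rfl | hq'
          · rintro ⟨hx, -, -⟩; omega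
          · rintro ⟨hx, hy, hz⟩
            have := hB q hq'
            omega
          · rintro ⟨hx, hy, hz⟩
            exact hBav p hp' wm hwm ⟨hx, hy⟩
          · exact hBnc p hp' q hq')
        (fun w hw => hW w (Finset.mem_of_mem_erase hw))
        hchain'
        (fun p hp w hw => hAav p hp w (Finset.mem_of_mem_erase hw))
        (by
          intro p hp w hw
          rcases Finset.mem_insert.1 hp with rfl | hp'
          · have := (htop w (Finset.mem_of_mem_erase hw)).2
            simp only
            omega
          · exact hBav p hp' w (Finset.mem_of_mem_erase hw))
        (by
          rw [Finset.disjoint_insert_right]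
          exact ⟨hundm ▸ hWA wm hwm, hdisj⟩)
        (fun w hw => hWA w (Finset.mem_of_mem_erase hw))
        (by
          intro w hw
          rw [Finset.mem_insert]
          rintro (heq | hmem)
          · exact Finset.ne_of_mem_erase hw
              (hWinj w (Finset.mem_of_mem_erase hw) wm hwm (heq.trans hundm.symm))
          · exact hWB w (Finset.mem_of_mem_erase hw) hmem)
        (fun w hw w' hw' => hWinj w (Finset.mem_of_mem_erase hw) w' (Finset.mem_of_mem_erase hw'))
      rw [Finset.card_insert_of_notMem hfresh, Finset.card_erase_of_mem hwm] at hkey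
      omega
    by_cases h2 : wm.2 = N - 1
    · -- swap top wrap to A as (wm.1, N-1)
      have hσ : wm.1 < N - 1 := by omega
      have hundm : und wm = (wm.1, N - 1) := by
        rw [und, h2]
        exact Prod.ext (min_eq_left (by omega)) (max_eq_right (by omega))
      have hfresh : (wm.1, N - 1) ∉ A := hundm ▸ hWA wm hwm
      have hkey := ih N (insert (wm.1, N - 1) A) B (W.erase wm)
        (by rw [Finset.card_erase_of_mem hwm]; omega) hN
        (by
          intro p hp
          rcases Finset.mem_insert.1 hp with rfl | hp'
          · exact ⟨by omega, by omega⟩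
          · exact hA p hp')
        hB
        (by
          intro p hp q hq
          rcases Finset.mem_insert.1 hp with rfl | hp' <;>
            rcases Finset.mem_insert.1 hq with rfl | hq'
          · rintro ⟨hx, -, -⟩; omega
          · rintro ⟨hx, hy, hz⟩
            have := hA q hq'
            omega
          · rintro ⟨hx, hy, hz⟩
            exact hAav p hp' wm hwm ⟨hx, hy⟩
          · exact hAnc p hp' q hq')
        hBnc
        (fun w hw => hW w (Finset.mem_of_mem_erase hw))
        hchain'
        (by
          intro p hp w hw
          rcases Finset.mem_insert.1 hp with rfl | hp'
          · have := (htop w (Finset.mem_of_mem_erase hw)).1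
            simp only
            omega
          · exact hAav p hp' w (Finset.mem_of_mem_erase hw))
        (fun p hp w hw => hBav p hp w (Finset.mem_of_mem_erase hw))
        (by
          rw [Finset.disjoint_insert_left]
          exact ⟨hundm ▸ hWB wm hwm, hdisj⟩)
        (by
          intro w hw
          rw [Finset.mem_insert]
          rintro (heq | hmem)
          · exact Finset.ne_of_mem_erase hw
              (hWinj w (Finset.mem_of_mem_erase hw) wm hwm (heq.trans hundm.symm))
          · exact hWA w (Finset.mem_of_mem_erase hw) hmem)
        (fun w hw => hWB w (Finset.mem_of_mem_erase hw))
        (fun w hw w' hw' => hWinj w (Finset.mem_of_mem_erase hw) w' (Finset.mem_of_mem_erase hw'))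
      rw [Finset.card_insert_of_notMem hfresh, Finset.card_erase_of_mem hwm] at hkey
      omega
    by_cases h3 : wn.1 = 0
    · -- swap bottom wrap to B as (0, wn.2)
      have hτ0 : 0 < wn.2 := by omega
      have hundn : und wn = (0, wn.2) := by
        rw [und, h3]
        exact Prod.ext (min_eq_left (by omega)) (max_eq_right (by omega))
      have hfresh : ((0 : ℕ), wn.2) ∉ B := hundn ▸ hWB wn hwn
      have hkey := ih N A (insert (0, wn.2) B) (W.erase wn)
        (by rw [Finset.card_erase_of_mem hwn]; omega) hN hA
        (by
          intro p hp
          rcases Finset.mem_insert.1 hp with rfl | hp'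
          · exact ⟨by omega, by omega⟩
          · exact hB p hp')
        hAnc
        (by
          intro p hp q hq
          rcases Finset.mem_insert.1 hp with rfl | hp' <;>
            rcases Finset.mem_insert.1 hq with rfl | hq'
          · rintro ⟨hx, -, -⟩; omega
          · rintro ⟨hx, hy, hz⟩
            exact hBav q hq' wn hwn ⟨hy, hz⟩
          · rintro ⟨hx, hy, hz⟩
            omega
          · exact hBnc p hp' q hq')
        (fun w hw => hW w (Finset.mem_of_mem_erase hw))
        hchainn'
        (fun p hp w hw => hAav p hp w (Finset.mem_of_mem_erase hw))
        (by
          intro p hp w hw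
          rcases Finset.mem_insert.1 hp with rfl | hp'
          · have := (hbot w (Finset.mem_of_mem_erase hw)).2
            simp only
            omega
          · exact hBav p hp' w (Finset.mem_of_mem_erase hw))
        (by
          rw [Finset.disjoint_insert_right]
          exact ⟨hundn ▸ hWA wn hwn, hdisj⟩)
        (fun w hw => hWA w (Finset.mem_of_mem_erase hw))
        (by
          intro w hw
          rw [Finset.mem_insert]
          rintro (heq | hmem)
          · exact Finset.ne_of_mem_erase hw
              (hWinj w (Finset.mem_of_mem_erase hw) wn hwn (heq.trans hundn.symm))
          · exact hWB w (Finset.mem_of_mem_erase hw) hmem)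
        (fun w hw w' hw' => hWinj w (Finset.mem_of_mem_erase hw) w' (Finset.mem_of_mem_erase hw'))
      rw [Finset.card_insert_of_notMem hfresh, Finset.card_erase_of_mem hwn] at hkey
      omega
    by_cases h4 : wn.2 = 0
    · -- swap bottom wrap to A as (0, wn.1)
      have hσ0 : 0 < wn.1 := by omega
      have hundn : und wn = (0, wn.1) := by
        rw [und, h4]
        exact Prod.ext (min_eq_right (by omega)) (max_eq_left (by omega))
      have hfresh : ((0 : ℕ), wn.1) ∉ A := hundn ▸ hWA wn hwn
      have hkey := ih N (insert (0, wn.1) A) B (W.erase wn)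
        (by rw [Finset.card_erase_of_mem hwn]; omega) hN
        (by
          intro p hp
          rcases Finset.mem_insert.1 hp with rfl | hp'
          · exact ⟨by omega, by omega⟩
          · exact hA p hp')
        hB
        (by
          intro p hp q hq
          rcases Finset.mem_insert.1 hp with rfl | hp' <;>
            rcases Finset.mem_insert.1 hq with rfl | hq'
          · rintro ⟨hx, -, -⟩; omega
          · rintro ⟨hx, hy, hz⟩
            exact hAav q hq' wn hwn ⟨hy, hz⟩
          · rintro ⟨hx, hy, hz⟩
            omega
          · exact hAnc p hp' q hq')
        hBnc
        (fun w hw => hW w (Finset.mem_of_mem_erase hw))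
        hchainn'
        (by
          intro p hp w hw
          rcases Finset.mem_insert.1 hp with rfl | hp'
          · have := (hbot w (Finset.mem_of_mem_erase hw)).1
            simp only
            omega
          · exact hAav p hp' w (Finset.mem_of_mem_erase hw))
        (fun p hp w hw => hBav p hp w (Finset.mem_of_mem_erase hw))
        (by
          rw [Finset.disjoint_insert_left]
          exact ⟨hundn ▸ hWB wn hwn, hdisj⟩)
        (by
          intro w hw
          rw [Finset.mem_insert]
          rintro (heq | hmem)
          · exact Finset.ne_of_mem_erase hw
              (hWinj w (Finset.mem_of_mem_erase hw) wn hwn (heq.trans hundn.symm))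
          · exact hWA w (Finset.mem_of_mem_erase hw) hmem)
        (fun w hw => hWB w (Finset.mem_of_mem_erase hw))
        (fun w hw w' hw' => hWinj w (Finset.mem_of_mem_erase hw) w' (Finset.mem_of_mem_erase hw'))
      rw [Finset.card_insert_of_notMem hfresh, Finset.card_erase_of_mem hwn] at hkey
      omega
    -- direct count
    · have hσub : ∀ w ∈ W, w.1 ≤ N - 2 := by
        intro w hw
        have := (htop w hw).1
        omega
      have hτub : ∀ w ∈ W, w.2 ≤ N - 2 := by
        intro w hw
        have := (htop w hw).2
        omega
      have hσlb : ∀ w ∈ W, 1 ≤ w.1 := by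
        intro w hw
        have := (hbot w hw).1
        omega
      have hτlb : ∀ w ∈ W, 1 ≤ w.2 := by
        intro w hw
        have := (hbot w hw).2
        omega
      classical
      set Sσ := W.image Prod.fst with hSσ
      set Sτ := W.image Prod.snd with hSτ
      have hkpos : 1 ≤ Sσ.card := Finset.card_pos.2 (hWne.image _)
      have hlpos : 1 ≤ Sτ.card := Finset.card_pos.2 (hWne.image _)
      set P : ℕ × ℕ → Prop := fun p => p.1 + 2 ≤ p.2 with hP
      set nsA := A.filter P with hnsA
      set sA := A.filter (fun p => ¬ P p) with hsA2
      set nsB := B.filter P with hnsB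
      set sB := B.filter (fun p => ¬ P p) with hsB2
      have hsplitA : nsA.card + sA.card = A.card :=
        Finset.card_filter_add_card_filter_not (s := A) P
      have hsplitB : nsB.card + sB.card = B.card :=
        Finset.card_filter_add_card_filter_not (s := B) P
      set nsW := W.filter (fun w => P (und w)) with hnsW
      set sW := W.filter (fun w => ¬ P (und w)) with hsW
      have hsplitW : nsW.card + sW.card = W.card :=
        Finset.card_filter_add_card_filter_not (s := W) (fun w => P (und w))
      -- windows bound for A
      have hwinA := windows Sσ.card Sσ nsA 0 (N - 1) le_rfl
        (by
          intro p hp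
          have h' := Finset.mem_filter.1 hp
          have := hA p h'.1
          exact ⟨by omega, h'.2, by omega⟩)
        (fun p hp q hq => hAnc p (Finset.mem_of_mem_filter p hp) q (Finset.mem_of_mem_filter q hq))
        (by
          intro s hs
          obtain ⟨w, hw, rfl⟩ := Finset.mem_image.1 hs
          have := hσlb w hw
          have := hσub w hw
          omega)
        (by
          intro p hp s hs
          obtain ⟨w, hw, rfl⟩ := Finset.mem_image.1 hs
          exact hAav p (Finset.mem_of_mem_filter p hp) w hw)
      have hwinB := windows Sτ.card Sτ nsB 0 (N - 1) le_rfl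
        (by
          intro p hp
          have h' := Finset.mem_filter.1 hp
          have := hB p h'.1
          exact ⟨by omega, h'.2, by omega⟩)
        (fun p hp q hq => hBnc p (Finset.mem_of_mem_filter p hp) q (Finset.mem_of_mem_filter q hq))
        (by
          intro s hs
          obtain ⟨w, hw, rfl⟩ := Finset.mem_image.1 hs
          have := hτlb w hw
          have := hτub w hw
          omega)
        (by
          intro p hp s hs
          obtain ⟨w, hw, rfl⟩ := Finset.mem_image.1 hs
          exact hBav p (Finset.mem_of_mem_filter p hp) w hw)
      have hcA : nsA.card + Sσ.card ≤ N - 2 := by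
        rcases hwinA with h | ⟨_, h2⟩
        · omega
        · rw [h2] at hkpos; simp at hkpos
      have hcB : nsB.card + Sτ.card ≤ N - 2 := by
        rcases hwinB with h | ⟨_, h2⟩
        · omega
        · rw [h2] at hlpos; simp at hlpos
      -- chain bound
      have hcW : W.card + 1 ≤ Sσ.card + Sτ.card := chain_card W.card W le_rfl hWne hchain
      -- sides bound
      set sU := sW.image und with hsU
      have hcardsU : sU.card = sW.card := by
        apply Finset.card_image_of_injOn
        intro w hw w' hw' heq
        exact hWinj w (Finset.mem_of_mem_filter w hw) w' (Finset.mem_of_mem_filter w' hw') heq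
      have hside : sA.card + sB.card + sW.card ≤ N - 1 := by
        have hd1 : Disjoint sA sB :=
          Finset.disjoint_of_subset_left (Finset.filter_subset _ _)
            (Finset.disjoint_of_subset_right (Finset.filter_subset _ _) hdisj)
        have hd2 : Disjoint (sA ∪ sB) sU := by
          rw [Finset.disjoint_left]
          intro x hx hxU
          obtain ⟨w, hw, rfl⟩ := Finset.mem_image.1 hxU
          have hwW := Finset.mem_of_mem_filter w hw
          rcases Finset.mem_union.1 hx with h | h
          · exact hWA w hwW (Finset.mem_of_mem_filter _ h)
          · exact hWB w hwW (Finset.mem_of_mem_filter _ h)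
        have hbound := sides_bound N (sA ∪ sB ∪ sU) (by
          intro p hp
          rcases Finset.mem_union.1 hp with hp2 | hp2
          · rcases Finset.mem_union.1 hp2 with h | h
            · have h' := Finset.mem_filter.1 h
              exact ⟨(hA p h'.1).1, (hA p h'.1).2, h'.2⟩
            · have h' := Finset.mem_filter.1 h
              exact ⟨(hB p h'.1).1, (hB p h'.1).2, h'.2⟩
          · obtain ⟨w, hw, rfl⟩ := Finset.mem_image.1 hp2
            have hwW := Finset.mem_of_mem_filter w hw
            have h1 := (hW w hwW).1
            have h2 := (hW w hwW).2.1
            have h3 := (hW w hwW).2.2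
            have hns := (Finset.mem_filter.1 hw).2
            refine ⟨?_, ?_, hns⟩
            · rw [und]
              simp only
              omega
            · rw [und]
              simp only
              omega)
        rw [Finset.card_union_of_disjoint hd2, Finset.card_union_of_disjoint hd1, hcardsU] at hbound
        exact hbound
      have hcW' : (nsW.card + sW.card) + 1 ≤ Sσ.card + Sτ.card := by
        rw [hsplitW]; exact hcW
      have harith : ∀ (x1 x2 x3 s1 s2 s3 k l n : ℕ),
          x1 + k ≤ n - 2 → x2 + l ≤ n - 2 → (x3 + s3) + 1 ≤ k + l →
          s1 + s2 + s3 ≤ n - 1 → 1 ≤ k → 1 ≤ l → 3 ≤ n →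
          (x1 + s1) + (x2 + s2) + (x3 + s3) ≤ 3 * n - 6 := by
        intros; omega
      calc A.card + B.card + W.card
          = (nsA.card + sA.card) + (nsB.card + sB.card) + (nsW.card + sW.card) := by
            rw [hsplitA, hsplitB, hsplitW]
        _ ≤ 3 * N - 6 :=
            harith nsA.card nsB.card nsW.card sA.card sB.card sW.card Sσ.card Sτ.card N
              hcA hcB hcW' hside hkpos hlpos hN

/-- Let `n ≥ 3`. Any set of edges on a vertex set of size `n` that forms a
single deque with respect to some vertex order has at most `3n - 6` edges. -/
theorem deque_card_le (n : ℕ) (hn : 3 ≤ n) (V : Type) [LinearOrder V]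
    [Fintype V] (hV : Fintype.card V = n) (E : Finset (V × V))
    (hE : ∀ p ∈ E, p.1 < p.2) (hd : IsDeque (E : Set (V × V))) :
    E.card ≤ 3 * n - 6 := by
  classical
  obtain ⟨typ, wrap, hinj, hup, hlow⟩ := hd
  set e : V ≃o Fin n := (Fintype.orderIsoFinOfCardEq V hV).symm with hedef
  set f : V → ℕ := fun v => (e v : ℕ) with hfdef
  have hfmono : StrictMono f := fun a b h => by
    have : e a < e b := e.lt_iff_lt.2 h
    exact this
  have hflt : ∀ v : V, f v < n := fun v => (e v).isLt
  have hfinj : Function.Injective f := hfmono.injective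
  -- Ext order facts
  have hvtx_lt : ∀ a b : V, (vtx a : Ext V) < vtx b ↔ a < b := by
    intro a b
    exact Sum.Lex.inl_lt_inl_iff
  have hvw : ∀ (a : V) (m : ℕ), (vtx a : Ext V) < wpt m := by
    intro a m
    exact Sum.Lex.inl_lt_inr a m
  have hwpt_lt : ∀ m₁ m₂ : ℕ, (wpt m₁ : Ext V) < wpt m₂ ↔ m₁ < m₂ := by
    intro m₁ m₂
    exact Sum.Lex.inr_lt_inr_iff
  set g : V × V → ℕ × ℕ := fun p => (f p.1, f p.2) with hgdef
  have hginj : Function.Injective g := by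
    intro p q h
    have h1 : f p.1 = f q.1 := congrArg Prod.fst h
    have h2 : f p.2 = f q.2 := congrArg Prod.snd h
    exact Prod.ext (hfinj h1) (hfinj h2)
  set Eh := E.filter (fun p => typ p = EdgeType.hh) with hEh
  set Et := E.filter (fun p => typ p = EdgeType.tt) with hEt
  set Ew := E.filter (fun p => typ p = EdgeType.ht ∨ typ p = EdgeType.th) with hEw
  set st : V × V → ℕ × ℕ :=
    fun p => if typ p = EdgeType.ht then (f p.1, f p.2) else (f p.2, f p.1) with hstdef
  set A := Eh.image g with hA
  set B := Et.image g with hB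
  set W := Ew.image st with hW
  -- the two intervals of a wrap edge
  have hwrapiv : ∀ q ∈ Ew, ∃ s t : V, st q = (f s, f t) ∧
      upperIv typ wrap q = some (vtx s, wpt (wrap q)) ∧
      lowerIv typ wrap q = some (vtx t, wpt (wrap q)) := by
    intro q hq
    rcases (Finset.mem_filter.1 hq).2 with h | h
    · exact ⟨q.1, q.2, by simp [hstdef, h], by simp [upperIv, h], by simp [lowerIv, h]⟩
    · refine ⟨q.2, q.1, by simp [hstdef, h], by simp [upperIv, h], by simp [lowerIv, h]⟩
  have hund : ∀ q ∈ Ew, und (st q) = g q := by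
    intro q hq
    have hq12 : q.1 < q.2 := hE q (Finset.mem_of_mem_filter q hq)
    have hlt : f q.1 < f q.2 := hfmono hq12
    rw [hstdef, hgdef]
    simp only
    split_ifs
    · rw [und]
      exact Prod.ext (min_eq_left (le_of_lt hlt)) (max_eq_right (le_of_lt hlt))
    · rw [und]
      exact Prod.ext (min_eq_right (le_of_lt hlt)) (max_eq_left (le_of_lt hlt))
  have hstinj : Set.InjOn st Ew := by
    intro p hp q hq heq
    have hp12 : p.1 < p.2 := hE p (Finset.mem_of_mem_filter p hp)
    have hq12 : q.1 < q.2 := hE q (Finset.mem_of_mem_filter q hq)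
    rw [hstdef] at heq
    simp only at heq
    split_ifs at heq with hc1 hc2 hc2 <;>
      (have h1 := hfinj (congrArg Prod.fst heq)
       have h2 := hfinj (congrArg Prod.snd heq))
    · exact Prod.ext h1 h2
    · rw [h1, h2] at hp12
      exact absurd hq12 (asymm hp12)
    · rw [← h1, ← h2] at hq12
      exact absurd hp12 (asymm hq12)
    · exact Prod.ext h2 h1
  -- repackage the non-crossing hypotheses
  have hupE : ∀ p ∈ E, ∀ q ∈ E, ∀ i, upperIv typ wrap p = some i →
      ∀ j, upperIv typ wrap q = some j → ¬ IvCross i j := by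
    intro p hp q hq i hi j hj
    exact hup p (Finset.mem_coe.2 hp) q (Finset.mem_coe.2 hq) i (Option.mem_def.mpr hi)
      j (Option.mem_def.mpr hj)
  have hlowE : ∀ p ∈ E, ∀ q ∈ E, ∀ i, lowerIv typ wrap p = some i →
      ∀ j, lowerIv typ wrap q = some j → ¬ IvCross i j := by
    intro p hp q hq i hi j hj
    exact hlow p (Finset.mem_coe.2 hp) q (Finset.mem_coe.2 hq) i (Option.mem_def.mpr hi)
      j (Option.mem_def.mpr hj)
  -- hypotheses of the counting lemma
  have hAmem : ∀ p ∈ A, p.1 < p.2 ∧ p.2 < n := by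
    intro p hp
    obtain ⟨q, hq, rfl⟩ := Finset.mem_image.1 hp
    exact ⟨hfmono (hE q (Finset.mem_of_mem_filter q hq)), hflt _⟩
  have hBmem : ∀ p ∈ B, p.1 < p.2 ∧ p.2 < n := by
    intro p hp
    obtain ⟨q, hq, rfl⟩ := Finset.mem_image.1 hp
    exact ⟨hfmono (hE q (Finset.mem_of_mem_filter q hq)), hflt _⟩
  have hAnc : ∀ p ∈ A, ∀ q ∈ A, ¬ Cross p q := by
    intro p hp q hq hcr
    obtain ⟨p1, hp1, rfl⟩ := Finset.mem_image.1 hp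
    obtain ⟨q1, hq1, rfl⟩ := Finset.mem_image.1 hq
    have htp := (Finset.mem_filter.1 hp1).2
    have htq := (Finset.mem_filter.1 hq1).2
    obtain ⟨c1, c2, c3⟩ := hcr
    refine hupE p1 (Finset.mem_of_mem_filter p1 hp1) q1 (Finset.mem_of_mem_filter q1 hq1)
      (vtx p1.1, vtx p1.2) (by simp [upperIv, htp]) (vtx q1.1, vtx q1.2)
      (by simp [upperIv, htq]) ?_
    exact ⟨(hvtx_lt _ _).2 (hfmono.lt_iff_lt.1 c1), (hvtx_lt _ _).2 (hfmono.lt_iff_lt.1 c2),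
      (hvtx_lt _ _).2 (hfmono.lt_iff_lt.1 c3)⟩
  have hBnc : ∀ p ∈ B, ∀ q ∈ B, ¬ Cross p q := by
    intro p hp q hq hcr
    obtain ⟨p1, hp1, rfl⟩ := Finset.mem_image.1 hp
    obtain ⟨q1, hq1, rfl⟩ := Finset.mem_image.1 hq
    have htp := (Finset.mem_filter.1 hp1).2
    have htq := (Finset.mem_filter.1 hq1).2
    obtain ⟨c1, c2, c3⟩ := hcr
    refine hlowE p1 (Finset.mem_of_mem_filter p1 hp1) q1 (Finset.mem_of_mem_filter q1 hq1)
      (vtx p1.1, vtx p1.2) (by simp [lowerIv, htp]) (vtx q1.1, vtx q1.2)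
      (by simp [lowerIv, htq]) ?_
    exact ⟨(hvtx_lt _ _).2 (hfmono.lt_iff_lt.1 c1), (hvtx_lt _ _).2 (hfmono.lt_iff_lt.1 c2),
      (hvtx_lt _ _).2 (hfmono.lt_iff_lt.1 c3)⟩
  have hWmem : ∀ w ∈ W, w.1 ≠ w.2 ∧ w.1 < n ∧ w.2 < n := by
    intro w hw
    obtain ⟨q, hq, rfl⟩ := Finset.mem_image.1 hw
    have hq12 := hE q (Finset.mem_of_mem_filter q hq)
    rw [hstdef]
    simp only
    split_ifs
    · exact ⟨ne_of_lt (hfmono hq12), hflt _, hflt _⟩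
    · exact ⟨ne_of_gt (hfmono hq12), hflt _, hflt _⟩
  have hchainW : ∀ w ∈ W, ∀ w' ∈ W,
      (w.1 ≤ w'.1 ∧ w.2 ≤ w'.2) ∨ (w'.1 ≤ w.1 ∧ w'.2 ≤ w.2) := by
    intro w hw w' hw'
    obtain ⟨q, hq, rfl⟩ := Finset.mem_image.1 hw
    obtain ⟨q', hq', rfl⟩ := Finset.mem_image.1 hw'
    by_cases hqq : q = q'
    · subst hqq
      exact Or.inl ⟨le_refl _, le_refl _⟩
    have htypq := (Finset.mem_filter.1 hq).2
    have htypq' := (Finset.mem_filter.1 hq').2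
    have hqE := Finset.mem_of_mem_filter q hq
    have hq'E := Finset.mem_of_mem_filter q' hq'
    have hPne : wrap q ≠ wrap q' := fun h =>
      hqq (hinj q (Finset.mem_coe.2 hqE) q' (Finset.mem_coe.2 hq'E) htypq htypq' h)
    obtain ⟨s, t, hst, hupiv, hlowiv⟩ := hwrapiv q hq
    obtain ⟨s', t', hst', hupiv', hlowiv'⟩ := hwrapiv q' hq'
    rw [hst, hst']
    rcases lt_trichotomy (wrap q) (wrap q') with hP | hP | hP
    · right
      constructor
      · have hnotc := hupE q hqE q' hq'E _ hupiv _ hupiv'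
        have hns : ¬ ((vtx s : Ext V) < vtx s') := fun hlt =>
          hnotc ⟨hlt, hvw _ _, (hwpt_lt _ _).2 hP⟩
        have hss : s' ≤ s := le_of_not_gt (fun h => hns ((hvtx_lt _ _).2 h))
        exact hfmono.le_iff_le.2 hss
      · have hnotc := hlowE q hqE q' hq'E _ hlowiv _ hlowiv'
        have hns : ¬ ((vtx t : Ext V) < vtx t') := fun hlt =>
          hnotc ⟨hlt, hvw _ _, (hwpt_lt _ _).2 hP⟩
        have hss : t' ≤ t := le_of_not_gt (fun h => hns ((hvtx_lt _ _).2 h))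
        exact hfmono.le_iff_le.2 hss
    · exact absurd hP hPne
    · left
      constructor
      · have hnotc := hupE q' hq'E q hqE _ hupiv' _ hupiv
        have hns : ¬ ((vtx s' : Ext V) < vtx s) := fun hlt =>
          hnotc ⟨hlt, hvw _ _, (hwpt_lt _ _).2 hP⟩
        have hss : s ≤ s' := le_of_not_gt (fun h => hns ((hvtx_lt _ _).2 h))
        exact hfmono.le_iff_le.2 hss
      · have hnotc := hlowE q' hq'E q hqE _ hlowiv' _ hlowiv
        have hns : ¬ ((vtx t' : Ext V) < vtx t) := fun hlt =>
          hnotc ⟨hlt, hvw _ _, (hwpt_lt _ _).2 hP⟩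
        have hss : t ≤ t' := le_of_not_gt (fun h => hns ((hvtx_lt _ _).2 h))
        exact hfmono.le_iff_le.2 hss
  have hAav : ∀ p ∈ A, ∀ w ∈ W, ¬ (p.1 < w.1 ∧ w.1 < p.2) := by
    intro p hp w hw hcontra
    obtain ⟨p1, hp1, rfl⟩ := Finset.mem_image.1 hp
    obtain ⟨q, hq, rfl⟩ := Finset.mem_image.1 hw
    have htp := (Finset.mem_filter.1 hp1).2
    obtain ⟨s, t, hst, hupiv, hlowiv⟩ := hwrapiv q hq
    rw [hst] at hcontra
    obtain ⟨c1, c2⟩ := hcontra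
    refine hupE p1 (Finset.mem_of_mem_filter p1 hp1) q (Finset.mem_of_mem_filter q hq)
      (vtx p1.1, vtx p1.2) (by simp [upperIv, htp]) _ hupiv ?_
    exact ⟨(hvtx_lt _ _).2 (hfmono.lt_iff_lt.1 c1), (hvtx_lt _ _).2 (hfmono.lt_iff_lt.1 c2),
      hvw _ _⟩
  have hBav : ∀ p ∈ B, ∀ w ∈ W, ¬ (p.1 < w.2 ∧ w.2 < p.2) := by
    intro p hp w hw hcontra
    obtain ⟨p1, hp1, rfl⟩ := Finset.mem_image.1 hp
    obtain ⟨q, hq, rfl⟩ := Finset.mem_image.1 hw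
    have htp := (Finset.mem_filter.1 hp1).2
    obtain ⟨s, t, hst, hupiv, hlowiv⟩ := hwrapiv q hq
    rw [hst] at hcontra
    obtain ⟨c1, c2⟩ := hcontra
    refine hlowE p1 (Finset.mem_of_mem_filter p1 hp1) q (Finset.mem_of_mem_filter q hq)
      (vtx p1.1, vtx p1.2) (by simp [lowerIv, htp]) _ hlowiv ?_
    exact ⟨(hvtx_lt _ _).2 (hfmono.lt_iff_lt.1 c1), (hvtx_lt _ _).2 (hfmono.lt_iff_lt.1 c2),
      hvw _ _⟩
  have hdisjAB : Disjoint A B := by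
    rw [Finset.disjoint_left]
    intro p hpA hpB
    obtain ⟨p1, hp1, heq1⟩ := Finset.mem_image.1 hpA
    obtain ⟨q1, hq1, heq2⟩ := Finset.mem_image.1 hpB
    have : p1 = q1 := hginj (heq1.trans heq2.symm)
    have htp := (Finset.mem_filter.1 hp1).2
    have htq := (Finset.mem_filter.1 hq1).2
    rw [this, htq] at htp
    exact EdgeType.noConfusion htp
  have hWA : ∀ w ∈ W, und w ∉ A := by
    intro w hw hmem
    obtain ⟨q, hq, rfl⟩ := Finset.mem_image.1 hw
    rw [hund q hq] at hmem
    obtain ⟨p1, hp1, heq⟩ := Finset.mem_image.1 hmem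
    have : p1 = q := hginj heq
    have htp := (Finset.mem_filter.1 hp1).2
    have htq := (Finset.mem_filter.1 hq).2
    rw [this] at htp
    rcases htq with h | h <;> (rw [h] at htp; exact EdgeType.noConfusion htp)
  have hWB : ∀ w ∈ W, und w ∉ B := by
    intro w hw hmem
    obtain ⟨q, hq, rfl⟩ := Finset.mem_image.1 hw
    rw [hund q hq] at hmem
    obtain ⟨p1, hp1, heq⟩ := Finset.mem_image.1 hmem
    have : p1 = q := hginj heq
    have htp := (Finset.mem_filter.1 hp1).2
    have htq := (Finset.mem_filter.1 hq).2
    rw [this] at htp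
    rcases htq with h | h <;> (rw [h] at htp; exact EdgeType.noConfusion htp)
  have hWinj : ∀ w ∈ W, ∀ w' ∈ W, und w = und w' → w = w' := by
    intro w hw w' hw' heq
    obtain ⟨q, hq, rfl⟩ := Finset.mem_image.1 hw
    obtain ⟨q', hq', rfl⟩ := Finset.mem_image.1 hw'
    rw [hund q hq, hund q' hq'] at heq
    rw [hstinj hq hq' (congrArg st (hginj heq))]
  -- cardinalities
  have hcardA : A.card = Eh.card := Finset.card_image_of_injective Eh hginj
  have hcardB : B.card = Et.card := Finset.card_image_of_injective Et hginj
  have hcardW : W.card = Ew.card := Finset.card_image_of_injOn hstinj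
  have hsplit1 : Eh.card + (E.filter (fun p => ¬ typ p = EdgeType.hh)).card = E.card :=
    Finset.card_filter_add_card_filter_not (s := E) (fun p => typ p = EdgeType.hh)
  have hsplit2 : ((E.filter (fun p => ¬ typ p = EdgeType.hh)).filter
        (fun p => typ p = EdgeType.tt)).card +
      ((E.filter (fun p => ¬ typ p = EdgeType.hh)).filter
        (fun p => ¬ typ p = EdgeType.tt)).card =
      (E.filter (fun p => ¬ typ p = EdgeType.hh)).card :=
    Finset.card_filter_add_card_filter_not
      (s := E.filter (fun p => ¬ typ p = EdgeType.hh)) (fun p => typ p = EdgeType.tt)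
  have heqt : (E.filter (fun p => ¬ typ p = EdgeType.hh)).filter
      (fun p => typ p = EdgeType.tt) = Et := by
    rw [Finset.filter_filter, hEt]
    apply Finset.filter_congr
    intro x _
    cases h : typ x <;> simp [h]
  have heqw : (E.filter (fun p => ¬ typ p = EdgeType.hh)).filter
      (fun p => ¬ typ p = EdgeType.tt) = Ew := by
    rw [Finset.filter_filter, hEw]
    apply Finset.filter_congr
    intro x _
    cases h : typ x <;> simp [h]
  rw [heqt, heqw] at hsplit2
  have hfinal := main_count Ew.card n A B W (by omega) hn hAmem hBmem hAnc hBnc hWmem hchainW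
    hAav hBav hdisjAB hWA hWB hWinj
  omega

end DequePaper
end

section
/- Let n ≥ 3 and k ≥ 1. A finite simple graph with n vertices admitting a deque layout with k deques has at most (2k+1)n − 5k − 1 edges. -/
namespace DequePaper

variable {V : Type} [LinearOrder V]

/-!
Edges joining consecutive vertices of the order number at most `n - 1`; every other edge is a
chord, passing over some vertex, and each deque carries at most `2n - 5` chords.

A stack of chords, together with vertices over which none of them passes, has at most `n` members:
charge each chord injectively to a vertex strictly inside it. In a deque the hh and the tt edges
form two such stacks. Without wrap edges, the chord from the first to the last vertex is missing
from one of them, which saves one more. Otherwise no hh edge passes over the head of a wrap edge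
and no tt edge over its tail, and the nesting of the wrap intervals makes the pairs (head, tail) a
chain, so `w` wrap edges have at least `w + 1` distinct heads and tails together. Counting the
heads with the hh stack and the tails with the tt stack gives the bound, except at the first and
the last vertex: such a vertex that is a tail is paid for by a wrap edge redrawn as an hh chord,
and one that is a head by a wrap edge redrawn as a tt chord.
-/

theorem isStack_union {F₁ F₂ : Set (V × V)} (h₁ : IsStack F₁) (h₂ : IsStack F₂)
    (h : ∀ e ∈ F₁, ∀ f ∈ F₂, ¬ Cross e f ∧ ¬ Cross f e) : IsStack (F₁ ∪ F₂) := by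
  rintro e (he | he) f (hf | hf)
  exacts [h₁ e he f hf, (h e he f hf).1, (h f hf e he).2, h₂ e he f hf]

theorem isStack_singleton (e : V × V) : IsStack ({e} : Set (V × V)) := by
  rintro _ rfl _ rfl ⟨h, -⟩
  exact lt_irrefl _ h

theorem IsStack.mono {F₁ F₂ : Set (V × V)} (h : IsStack F₂) (hF : F₁ ⊆ F₂) : IsStack F₁ :=
  fun e he f hf => h e (hF he) f (hF hf)

def IsChord (S : Finset ℕ) (e : ℕ × ℕ) : Prop :=
  e.1 ∈ S ∧ e.2 ∈ S ∧ ∃ z ∈ S, e.1 < z ∧ z < e.2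

instance (S : Finset ℕ) : DecidablePred (IsChord S) :=
  fun _ => inferInstanceAs (Decidable (_ ∧ _ ∧ _))

theorem IsChord.lt {S : Finset ℕ} {e : ℕ × ℕ} (h : IsChord S e) : e.1 < e.2 :=
  let ⟨_, _, _, _, h₁, h₂⟩ := h; h₁.trans h₂

theorem isChord_of_isLeast_of_isGreatest {S : Finset ℕ} (hS : 3 ≤ S.card) {m M : ℕ}
    (hm : IsLeast (S : Set ℕ) m) (hM : IsGreatest (S : Set ℕ) M) : IsChord S (m, M) := by
  obtain ⟨z, hz, hzm⟩ := Finset.exists_mem_ne (s := S.erase m)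
    (by rw [Finset.card_erase_of_mem hm.1]; omega) M
  obtain ⟨hzm', hzS⟩ := Finset.mem_erase.1 hz
  exact ⟨hm.1, hM.1, z, hzS, lt_of_le_of_ne (hm.2 hzS) (Ne.symm hzm'),
    lt_of_le_of_ne (hM.2 hzS) hzm⟩

/-- The point of `S` charged to the chord `e` of `F`: the left end of the next shorter chord of `F`
with the same right end, or else the predecessor of `e.2` in `S`. -/
noncomputable def chordPoint (S : Finset ℕ) (F : Finset (ℕ × ℕ)) (e : ℕ × ℕ) : ℕ :=
  sInf {z | z ∈ S ∧ e.1 < z ∧ z < e.2 ∧ ((z, e.2) ∈ F ∨ ∀ y ∈ S, z < y → e.2 ≤ y)}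

section chordPoint

variable {S : Finset ℕ} {F : Finset (ℕ × ℕ)} {e : ℕ × ℕ}

theorem chordPoint_spec (he : IsChord S e) :
    chordPoint S F e ∈ S ∧ e.1 < chordPoint S F e ∧ chordPoint S F e < e.2 ∧
      ((chordPoint S F e, e.2) ∈ F ∨ ∀ y ∈ S, chordPoint S F e < y → e.2 ≤ y) := by
  obtain ⟨-, -, z, hz⟩ := he
  obtain ⟨p, hp, hpmax⟩ := (S.filter fun z => e.1 < z ∧ z < e.2).exists_max_image id
    ⟨z, Finset.mem_filter.2 hz⟩
  rw [Finset.mem_filter] at hp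
  refine Nat.sInf_mem (s := {z | z ∈ S ∧ e.1 < z ∧ z < e.2 ∧
    ((z, e.2) ∈ F ∨ ∀ y ∈ S, z < y → e.2 ≤ y)}) ?_
  refine ⟨p, hp.1, hp.2.1, hp.2.2, Or.inr fun y hy hpy => ?_⟩
  by_contra! hye
  exact absurd (hpmax y (Finset.mem_filter.2 ⟨hy, hp.2.1.trans hpy, hye⟩)) (not_le.2 hpy)

theorem chordPoint_le {x : ℕ} (hx : x ∈ S) (hex : e.1 < x) (hxe : x < e.2) (hxF : (x, e.2) ∈ F) :
    chordPoint S F e ≤ x :=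
  Nat.sInf_le ⟨hx, hex, hxe, Or.inl hxF⟩

theorem chordPoint_ne (hF : IsStack (F : Set (ℕ × ℕ))) (hFS : ∀ e ∈ F, IsChord S e)
    {e' : ℕ × ℕ} (he : e ∈ F) (he' : e' ∈ F) (h : e.2 < e'.2 ∨ e.2 = e'.2 ∧ e.1 < e'.1) :
    chordPoint S F e ≠ chordPoint S F e' := by
  obtain ⟨-, he1, he2, -⟩ := chordPoint_spec (F := F) (hFS e he)
  obtain ⟨-, he1', -, hz'⟩ := chordPoint_spec (F := F) (hFS e' he')
  intro heq
  rw [← heq] at he1' hz'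
  rcases h with h | ⟨h, h'⟩
  · rcases hz' with hz' | hz'
    · exact hF e he _ hz' ⟨he1, he2, h⟩
    · exact absurd (hz' e.2 (hFS e he).2.1 he2) (not_le.2 h)
  · have := chordPoint_le (hFS e' he').1 h' (h ▸ (hFS e' he').lt) (by rw [h]; exact he')
    omega

theorem chordPoint_injOn (hF : IsStack (F : Set (ℕ × ℕ))) (hFS : ∀ e ∈ F, IsChord S e) :
    Set.InjOn (chordPoint S F) F := by
  intro e he e' he' heq
  by_contra hne
  rcases lt_trichotomy e.2 e'.2 with h | h | h
  · exact chordPoint_ne hF hFS he he' (Or.inl h) heq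
  · rcases lt_trichotomy e.1 e'.1 with h' | h' | h'
    · exact chordPoint_ne hF hFS he he' (Or.inr ⟨h, h'⟩) heq
    · exact hne (Prod.ext h' h)
    · exact chordPoint_ne hF hFS he' he (Or.inr ⟨h.symm, h'⟩) heq.symm
  · exact chordPoint_ne hF hFS he' he (Or.inl h) heq.symm

end chordPoint

theorem IsStack.card_add_card_le {S Y : Finset ℕ} {F : Finset (ℕ × ℕ)}
    (hF : IsStack (F : Set (ℕ × ℕ))) (hFS : ∀ e ∈ F, IsChord S e) (hYS : Y ⊆ S)
    (hFY : ∀ e ∈ F, ∀ y ∈ Y, ¬ (e.1 < y ∧ y < e.2)) : F.card + Y.card ≤ S.card := by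
  have hmaps : ∀ e ∈ F, chordPoint S F e ∈ S \ Y := fun e he =>
    let ⟨hS, h₁, h₂, _⟩ := chordPoint_spec (F := F) (hFS e he)
    Finset.mem_sdiff.2 ⟨hS, fun hY => hFY e he _ hY ⟨h₁, h₂⟩⟩
  have := Finset.card_le_card_of_injOn _ hmaps (chordPoint_injOn hF hFS)
  have := Finset.card_sdiff_add_card_eq_card hYS
  omega

section Extremes

variable {S : Finset ℕ} {m M : ℕ} (hm : IsLeast (S : Set ℕ) m) (hM : IsGreatest (S : Set ℕ) M)
include hm hM

theorem IsChord.not_lt_lt_of_extreme {e : ℕ × ℕ} (he : IsChord S e) :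
    ∀ y ∈ ({m, M} : Finset ℕ), ¬ (e.1 < y ∧ y < e.2) := by
  simp only [Finset.mem_insert, Finset.mem_singleton]
  rintro y (rfl | rfl) ⟨h₁, h₂⟩
  exacts [absurd (hm.2 he.1) (not_le.2 h₁), absurd (hM.2 he.2.1) (not_le.2 h₂)]

theorem isStack_insert_min_max {F : Finset (ℕ × ℕ)} (hF : IsStack (F : Set (ℕ × ℕ)))
    (hFS : ∀ e ∈ F, IsChord S e) : IsStack (insert (m, M) F : Set (ℕ × ℕ)) := by
  refine isStack_union (isStack_singleton _) hF ?_
  rintro _ rfl e he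
  have h₁ := hm.2 (hFS e he).1
  have h₂ := hM.2 (hFS e he).2.1
  exact ⟨fun h => absurd h.2.2 (not_lt.2 h₂), fun h => absurd h.1 (not_lt.2 h₁)⟩

end Extremes

theorem IsStack.card_add_two_le {S : Finset ℕ} {F : Finset (ℕ × ℕ)} (hS : 2 ≤ S.card)
    (hF : IsStack (F : Set (ℕ × ℕ))) (hFS : ∀ e ∈ F, IsChord S e) : F.card + 2 ≤ S.card := by
  have hne : S.Nonempty := Finset.card_pos.1 (by omega)
  have hlt := S.min'_lt_max'_of_card (by omega)
  have hY : ({S.min' hne, S.max' hne} : Finset ℕ) ⊆ S := by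
    simp [Finset.insert_subset_iff, S.min'_mem, S.max'_mem]
  have := hF.card_add_card_le hFS hY fun e he =>
    (hFS e he).not_lt_lt_of_extreme (S.isLeast_min' hne) (S.isGreatest_max' hne)
  rwa [Finset.card_pair hlt.ne] at this

theorem IsStack.card_add_three_le {S : Finset ℕ} {F : Finset (ℕ × ℕ)} (hS : 3 ≤ S.card)
    (hF : IsStack (F : Set (ℕ × ℕ))) (hFS : ∀ e ∈ F, IsChord S e) {m M : ℕ}
    (hm : IsLeast (S : Set ℕ) m) (hM : IsGreatest (S : Set ℕ) M) (hmM : (m, M) ∉ F) :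
    F.card + 3 ≤ S.card := by
  have hF' : IsStack ((insert (m, M) F : Finset (ℕ × ℕ)) : Set (ℕ × ℕ)) := by
    rw [Finset.coe_insert]
    exact isStack_insert_min_max hm hM hF hFS
  have := hF'.card_add_two_le (S := S) (by omega) fun e he => by
    rcases Finset.mem_insert.1 he with rfl | he
    exacts [isChord_of_isLeast_of_isGreatest hS hm hM, hFS e he]
  rwa [Finset.card_insert_of_notMem hmM] at this

theorem IsStack.card_add_card_add_five_le {S : Finset ℕ} {F₁ F₂ : Finset (ℕ × ℕ)}
    (hS : 3 ≤ S.card) (h₁ : IsStack (F₁ : Set (ℕ × ℕ))) (h₂ : IsStack (F₂ : Set (ℕ × ℕ)))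
    (hF₁ : ∀ e ∈ F₁, IsChord S e) (hF₂ : ∀ e ∈ F₂, IsChord S e) (hdisj : Disjoint F₁ F₂) :
    F₁.card + F₂.card + 5 ≤ 2 * S.card := by
  have hne : S.Nonempty := Finset.card_pos.1 (by omega)
  have hm := S.isLeast_min' hne
  have hM := S.isGreatest_max' hne
  by_cases hmM : (S.min' hne, S.max' hne) ∈ F₁
  · have := h₁.card_add_two_le (by omega) hF₁
    have := h₂.card_add_three_le hS hF₂ hm hM (Finset.disjoint_left.1 hdisj hmM)
    omega
  · have := h₁.card_add_three_le hS hF₁ hm hM hmM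
    have := h₂.card_add_two_le (by omega) hF₂
    omega

theorem IsChain.card_add_one_le_card_image_fst_add_card_image_snd {α β : Type*}
    [LinearOrder α] [LinearOrder β] {C : Finset (α × β)} (hC : IsChain (· ≤ ·) (C : Set (α × β)))
    (hne : C.Nonempty) : C.card + 1 ≤ (C.image Prod.fst).card + (C.image Prod.snd).card := by
  induction C using Finset.induction_on_max_value (f := (toLex : α × β → α ×ₗ β)) with
  | empty => exact absurd hne Finset.not_nonempty_empty
  | insert a s ha hmax ih =>
    rcases s.eq_empty_or_nonempty with rfl | hs
    · simp
    have hle : ∀ x ∈ s, x ≤ a := fun x hx => by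
      rcases hC.total (Finset.mem_coe.2 (Finset.mem_insert_of_mem hx))
        (Finset.mem_coe.2 (Finset.mem_insert_self a s)) with h | h
      · exact h
      · exact absurd (Prod.Lex.toLex_strictMono (lt_of_le_of_ne h fun h => ha (h ▸ hx)))
          (not_lt.2 (hmax x hx))
    have hnew : a.1 ∉ s.image Prod.fst ∨ a.2 ∉ s.image Prod.snd := by
      by_contra! h
      obtain ⟨⟨u, hu, hua⟩, ⟨v, hv, hva⟩⟩ := And.intro (Finset.mem_image.1 h.1)
        (Finset.mem_image.1 h.2)
      rcases hC.total (Finset.mem_coe.2 (Finset.mem_insert_of_mem hu))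
        (Finset.mem_coe.2 (Finset.mem_insert_of_mem hv)) with huv | hvu
      · exact ha (Prod.ext (le_antisymm (hle v hv).1 (hua ▸ huv.1)) hva ▸ hv)
      · exact ha (Prod.ext hua (le_antisymm (hle u hu).2 (hva ▸ hvu.2)) ▸ hu)
    have := ih (hC.mono (by simp [Set.subset_insert])) hs
    rw [Finset.image_insert, Finset.image_insert, Finset.card_insert_of_notMem ha]
    have := Finset.card_le_card (Finset.subset_insert a.1 (s.image Prod.fst))
    have := Finset.card_le_card (Finset.subset_insert a.2 (s.image Prod.snd))
    rcases hnew with h | h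
    · rw [Finset.card_insert_of_notMem h]; omega
    · rw [Finset.card_insert_of_notMem h]; omega

/-- The wrap edges of a deque, with the ends `head` and `tail` at which their intervals enter the
upper and the lower family; non-crossing of the wrap intervals makes them a chain. -/
structure IsWrapChain (S : Finset ℕ) (W : Finset (ℕ × ℕ)) (head tail : ℕ × ℕ → ℕ) : Prop where
  mem : ∀ e ∈ W, e.1 ∈ S ∧ e.2 ∈ S ∧ e.1 < e.2
  ends : ∀ e ∈ W, head e = e.1 ∧ tail e = e.2 ∨ head e = e.2 ∧ tail e = e.1
  chain : ∀ e ∈ W, ∀ f ∈ W, head e ≤ head f ∧ tail e ≤ tail f ∨ head f ≤ head e ∧ tail f ≤ tail e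

/-- The hh chords of a deque with wrap edges `W` (or its tt chords, with `head` the tail end). -/
structure IsPage (S : Finset ℕ) (W H : Finset (ℕ × ℕ)) (head : ℕ × ℕ → ℕ) : Prop where
  isStack : IsStack (H : Set (ℕ × ℕ))
  isChord : ∀ e ∈ H, IsChord S e
  disjoint : Disjoint H W
  not_lt_head_lt : ∀ e ∈ H, ∀ f ∈ W, ¬ (e.1 < head f ∧ head f < e.2)

/-- Wrap edges that can be redrawn as chords on the page of the heads. -/
def redrawable (m M : ℕ) (W : Finset (ℕ × ℕ)) (head tail : ℕ × ℕ → ℕ) : Finset (ℕ × ℕ) :=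
  W.filter fun e => (tail e = m ∨ tail e = M) ∧ ∀ f ∈ W, ¬ (e.1 < head f ∧ head f < e.2)

namespace IsWrapChain

variable {S : Finset ℕ} {W : Finset (ℕ × ℕ)} {head tail : ℕ × ℕ → ℕ}
  (hW : IsWrapChain S W head tail)
include hW

theorem symm : IsWrapChain S W tail head :=
  ⟨hW.mem, fun e he => (hW.ends e he).symm.imp And.symm And.symm,
    fun e he f hf => (hW.chain e he f hf).imp And.symm And.symm⟩

theorem head_mem {e : ℕ × ℕ} (he : e ∈ W) : head e ∈ S := by
  rcases hW.ends e he with ⟨h, -⟩ | ⟨h, -⟩ <;> rw [h]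
  exacts [(hW.mem e he).1, (hW.mem e he).2.1]

theorem injOn_head_tail : Set.InjOn (fun e => (head e, tail e)) W := by
  intro e he f hf h
  obtain ⟨hh, ht⟩ := Prod.mk.inj h
  have := (hW.mem e he).2.2
  have := (hW.mem f hf).2.2
  rcases hW.ends e he with ⟨he₁, he₂⟩ | ⟨he₁, he₂⟩ <;>
    rcases hW.ends f hf with ⟨hf₁, hf₂⟩ | ⟨hf₁, hf₂⟩ <;>
    exact Prod.ext (by omega) (by omega)

theorem card_add_one_le (hne : W.Nonempty) :
    W.card + 1 ≤ (W.image head).card + (W.image tail).card := by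
  have hC : IsChain (· ≤ ·)
      ((W.image fun e => (head e, tail e) : Finset (ℕ × ℕ)) : Set (ℕ × ℕ)) := by
    rintro _ hx _ hy -
    obtain ⟨e, he, rfl⟩ := Finset.mem_image.1 hx
    obtain ⟨f, hf, rfl⟩ := Finset.mem_image.1 hy
    exact (hW.chain e he f hf).imp id id
  have := IsChain.card_add_one_le_card_image_fst_add_card_image_snd hC (hne.image _)
  rwa [Finset.card_image_of_injOn hW.injOn_head_tail, Finset.image_image,
    Finset.image_image] at this

theorem exists_le (hne : W.Nonempty) : ∃ e ∈ W, ∀ f ∈ W, head e ≤ head f ∧ tail e ≤ tail f := by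
  obtain ⟨e, he, hmin⟩ := W.exists_min_image (fun e => head e + tail e) hne
  refine ⟨e, he, fun f hf => ?_⟩
  have := hmin f hf
  rcases hW.chain e he f hf with h | h
  · exact h
  · omega

theorem exists_ge (hne : W.Nonempty) : ∃ e ∈ W, ∀ f ∈ W, head f ≤ head e ∧ tail f ≤ tail e := by
  obtain ⟨e, he, hmax⟩ := W.exists_max_image (fun e => head e + tail e) hne
  refine ⟨e, he, fun f hf => ?_⟩
  have := hmax f hf
  rcases hW.chain e he f hf with h | h
  · omega
  · exact h

variable {m M : ℕ} (hm : IsLeast (S : Set ℕ) m) (hM : IsGreatest (S : Set ℕ) M)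
include hm hM

theorem lt_head_lt_of_cross {e f : ℕ × ℕ} (hf : f ∈ redrawable m M W head tail) (he₁ : e.1 ∈ S)
    (he₂ : e.2 ∈ S) (h : Cross e f ∨ Cross f e) : e.1 < head f ∧ head f < e.2 := by
  obtain ⟨hfW, htail, -⟩ := Finset.mem_filter.1 hf
  obtain ⟨hf₁, hf₂, hlt⟩ := hW.mem f hfW
  have := hm.2 he₁; have := hM.2 he₂; have := hm.2 hf₁; have := hM.2 hf₂
  unfold Cross at h
  rcases hW.ends f hfW with ⟨h₁, h₂⟩ | ⟨h₁, h₂⟩ <;> omega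

theorem card_inter_le_card_redrawable :
    (W.image tail ∩ {m, M}).card ≤ (redrawable m M W head tail).card := by
  refine (Finset.card_le_card fun x hx => ?_).trans (Finset.card_image_le (f := tail))
  obtain ⟨hx, hxmM⟩ := Finset.mem_inter.1 hx
  obtain ⟨g, hg, rfl⟩ := Finset.mem_image.1 hx
  have hne : W.Nonempty := ⟨g, hg⟩
  have key : ∀ e ∈ W, tail e = tail g → (∀ f ∈ W, ¬ (e.1 < head f ∧ head f < e.2)) →
      tail g ∈ (redrawable m M W head tail).image tail := fun e he htail hpass =>
    Finset.mem_image.2 ⟨e, Finset.mem_filter.2 ⟨he, by simpa [htail] using hxmM, hpass⟩, htail⟩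
  rcases Finset.mem_insert.1 hxmM with hgm | hgM
  · obtain ⟨e, he, hle⟩ := hW.exists_le hne
    have hem : tail e = m := le_antisymm (hgm ▸ (hle g hg).2) (hm.2 (hW.symm.head_mem he))
    have := hm.2 (hW.head_mem he)
    have := (hW.mem e he).2.2
    refine key e he (hem.trans hgm.symm) fun f hf ⟨_, h⟩ => ?_
    have := (hle f hf).1
    rcases hW.ends e he with ⟨h₁, h₂⟩ | ⟨h₁, h₂⟩ <;> omega
  · obtain ⟨e, he, hge⟩ := hW.exists_ge hne
    rw [Finset.mem_singleton] at hgM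
    have heM : tail e = M := le_antisymm (hM.2 (hW.symm.head_mem he)) (hgM ▸ (hge g hg).2)
    have := hM.2 (hW.head_mem he)
    have := (hW.mem e he).2.2
    refine key e he (heM.trans hgM.symm) fun f hf ⟨h, _⟩ => ?_
    have := (hge f hf).1
    rcases hW.ends e he with ⟨h₁, h₂⟩ | ⟨h₁, h₂⟩ <;> omega

theorem isChord_of_mem_redrawable (hS : 3 ≤ S.card) {e : ℕ × ℕ}
    (hh : e ∈ redrawable m M W head tail) (ht : e ∈ redrawable m M W tail head) : IsChord S e := by
  obtain ⟨he, htail, -⟩ := Finset.mem_filter.1 hh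
  obtain ⟨-, hhead, -⟩ := Finset.mem_filter.1 ht
  have hmM := (isChord_of_isLeast_of_isGreatest hS hm hM).lt
  have : e = (m, M) := by
    have := (hW.mem e he).2.2
    rcases hW.ends e he with ⟨h₁, h₂⟩ | ⟨h₁, h₂⟩ <;> exact Prod.ext (by omega) (by omega)
  exact this ▸ isChord_of_isLeast_of_isGreatest hS hm hM

theorem card_filter_isChord_add_card_filter_add_card_filter_le (hS : 3 ≤ S.card) :
    (W.filter (IsChord S)).card + ((redrawable m M W head tail).filter (¬ IsChord S ·)).card +
      ((redrawable m M W tail head).filter (¬ IsChord S ·)).card ≤ W.card := by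
  have hdisj : Disjoint ((redrawable m M W head tail).filter (¬ IsChord S ·))
      ((redrawable m M W tail head).filter (¬ IsChord S ·)) :=
    Finset.disjoint_left.2 fun e h₁ h₂ => (Finset.mem_filter.1 h₁).2
      (hW.isChord_of_mem_redrawable hm hM hS (Finset.mem_filter.1 h₁).1 (Finset.mem_filter.1 h₂).1)
  have hsub : (redrawable m M W head tail).filter (¬ IsChord S ·) ∪
      (redrawable m M W tail head).filter (¬ IsChord S ·) ⊆ W.filter (¬ IsChord S ·) :=
    Finset.union_subset (Finset.filter_subset_filter _ (Finset.filter_subset _ _))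
      (Finset.filter_subset_filter _ (Finset.filter_subset _ _))
  have := Finset.card_le_card hsub
  rw [Finset.card_union_of_disjoint hdisj] at this
  have := Finset.card_filter_add_card_filter_not (s := W) (IsChord S)
  omega

end IsWrapChain

theorem IsPage.card_add_card_add_card_sdiff_add_two_le {S : Finset ℕ} {W H : Finset (ℕ × ℕ)}
    {head tail : ℕ × ℕ → ℕ} {m M : ℕ} (hH : IsPage S W H head) (hW : IsWrapChain S W head tail)
    (hm : IsLeast (S : Set ℕ) m) (hM : IsGreatest (S : Set ℕ) M) (hmM : m < M) :
    H.card + ((redrawable m M W head tail).filter (IsChord S)).card +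
      (W.image head \ {m, M}).card + 2 ≤ S.card := by
  set R := (redrawable m M W head tail).filter (IsChord S)
  have hRW : R ⊆ W := (Finset.filter_subset _ _).trans (Finset.filter_subset _ _)
  have hRpass : ∀ e ∈ R, ∀ f ∈ W, ¬ (e.1 < head f ∧ head f < e.2) := fun e he =>
    (Finset.mem_filter.1 (Finset.mem_filter.1 he).1).2.2
  have hcross : ∀ {e f : ℕ × ℕ}, IsChord S e → f ∈ R → Cross e f ∨ Cross f e →
      e.1 < head f ∧ head f < e.2 := fun he hf =>
    hW.lt_head_lt_of_cross hm hM (Finset.mem_filter.1 hf).1 he.1 he.2.1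
  have hF : IsStack ((H ∪ R : Finset (ℕ × ℕ)) : Set (ℕ × ℕ)) := by
    rw [Finset.coe_union]
    refine isStack_union hH.isStack (fun e he f hf hc => ?_) fun e he f hf => ?_
    · exact hRpass e he f (hRW hf) (hcross (Finset.mem_filter.1 he).2 hf (Or.inl hc))
    · exact ⟨fun hc => hH.not_lt_head_lt e he f (hRW hf) (hcross (hH.isChord e he) hf (Or.inl hc)),
        fun hc => hH.not_lt_head_lt e he f (hRW hf) (hcross (hH.isChord e he) hf (Or.inr hc))⟩
  have hFS : ∀ e ∈ H ∪ R, IsChord S e := fun e he =>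
    (Finset.mem_union.1 he).elim (hH.isChord e) fun he => (Finset.mem_filter.1 he).2
  have hY : W.image head ∪ {m, M} ⊆ S := by
    refine Finset.union_subset (fun x hx => ?_)
      (Finset.insert_subset_iff.2 ⟨hm.1, Finset.singleton_subset_iff.2 hM.1⟩)
    obtain ⟨f, hf, rfl⟩ := Finset.mem_image.1 hx
    exact hW.head_mem hf
  have hFY : ∀ e ∈ H ∪ R, ∀ y ∈ W.image head ∪ {m, M}, ¬ (e.1 < y ∧ y < e.2) := by
    intro e he y hy
    rcases Finset.mem_union.1 hy with hy | hy
    · obtain ⟨f, hf, rfl⟩ := Finset.mem_image.1 hy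
      rcases Finset.mem_union.1 he with he | he
      exacts [hH.not_lt_head_lt e he f hf, hRpass e he f hf]
    · exact (hFS e he).not_lt_lt_of_extreme hm hM y hy
  have := hF.card_add_card_le hFS hY hFY
  rwa [Finset.card_union_of_disjoint (hH.disjoint.mono_right hRW), ← Finset.card_sdiff_add_card,
    Finset.card_pair hmM.ne, ← add_assoc] at this

theorem IsWrapChain.card_add_card_add_card_filter_add_five_le {S : Finset ℕ}
    {W H T : Finset (ℕ × ℕ)} {head tail : ℕ × ℕ → ℕ} (hS : 3 ≤ S.card)
    (hW : IsWrapChain S W head tail) (hne : W.Nonempty) (hH : IsPage S W H head)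
    (hT : IsPage S W T tail) :
    H.card + T.card + (W.filter (IsChord S)).card + 5 ≤ 2 * S.card := by
  have hSne : S.Nonempty := Finset.card_pos.1 (by omega)
  have hm := S.isLeast_min' hSne
  have hM := S.isGreatest_max' hSne
  have hmM := (isChord_of_isLeast_of_isGreatest hS hm hM).lt
  set m := S.min' hSne
  set M := S.max' hSne
  have pageH := hH.card_add_card_add_card_sdiff_add_two_le hW hm hM hmM
  have pageT := hT.card_add_card_add_card_sdiff_add_two_le hW.symm hm hM hmM
  have stair := hW.card_add_one_le hne
  have hA := Finset.card_sdiff_add_card_inter (W.image head) {m, M}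
  have hB := Finset.card_sdiff_add_card_inter (W.image tail) {m, M}
  have extH := hW.card_inter_le_card_redrawable hm hM
  have extT := hW.symm.card_inter_le_card_redrawable hm hM
  have hRh := Finset.card_filter_add_card_filter_not (s := redrawable m M W head tail) (IsChord S)
  have hRt := Finset.card_filter_add_card_filter_not (s := redrawable m M W tail head) (IsChord S)
  have spine := hW.card_filter_isChord_add_card_filter_add_card_filter_le hm hM hS
  omega

theorem IsDeque.mono {E E' : Set (V × V)} (h : IsDeque E) (hE : E' ⊆ E) : IsDeque E' := by
  obtain ⟨typ, wrap, hinj, hU, hL⟩ := h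
  exact ⟨typ, wrap, fun e he f hf => hinj e (hE he) f (hE hf),
    fun e he f hf => hU e (hE he) f (hE hf), fun e he f hf => hL e (hE he) f (hE hf)⟩

def EdgeType.IsWrap (t : EdgeType) : Prop := t = .ht ∨ t = .th

instance : DecidablePred EdgeType.IsWrap := fun t => inferInstanceAs (Decidable (t = _ ∨ t = _))

/-- The end of a wrap edge whose interval lies in the upper family; `tailEnd` is the other one. -/
def headEnd (typ : V × V → EdgeType) (e : V × V) : V := if typ e = .th then e.2 else e.1

def tailEnd (typ : V × V → EdgeType) (e : V × V) : V := if typ e = .th then e.1 else e.2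

theorem vtx_lt_vtx {a b : V} : vtx a < vtx b ↔ a < b := Sum.Lex.inl_lt_inl_iff

theorem vtx_lt_wpt (a : V) (p : ℕ) : vtx a < wpt p := Sum.Lex.inl_lt_inr a p

theorem wpt_lt_wpt {p q : ℕ} : (wpt p : Ext V) < wpt q ↔ p < q := Sum.Lex.inr_lt_inr_iff

section Witness

variable {typ : V × V → EdgeType} {wrap : V × V → ℕ} {e f : V × V}

omit [LinearOrder V] in
theorem upperIv_of_hh (h : typ e = .hh) : upperIv typ wrap e = some (vtx e.1, vtx e.2) := by
  simp [upperIv, h]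

omit [LinearOrder V] in
theorem lowerIv_of_tt (h : typ e = .tt) : lowerIv typ wrap e = some (vtx e.1, vtx e.2) := by
  simp [lowerIv, h]

omit [LinearOrder V] in
theorem upperIv_of_isWrap (h : (typ e).IsWrap) :
    upperIv typ wrap e = some (vtx (headEnd typ e), wpt (wrap e)) := by
  rcases h with h | h <;> simp [upperIv, headEnd, h]

omit [LinearOrder V] in
theorem lowerIv_of_isWrap (h : (typ e).IsWrap) :
    lowerIv typ wrap e = some (vtx (tailEnd typ e), wpt (wrap e)) := by
  rcases h with h | h <;> simp [lowerIv, tailEnd, h]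

namespace IsDequeWitness

variable {E : Set (V × V)} (hw : IsDequeWitness E typ wrap)
include hw

theorem isStack_hh : IsStack {e ∈ E | typ e = .hh} := by
  rintro e ⟨he, het⟩ f ⟨hf, hft⟩ ⟨h₁, h₂, h₃⟩
  exact hw.2.1 e he f hf _ (upperIv_of_hh het) _ (upperIv_of_hh hft)
    ⟨vtx_lt_vtx.2 h₁, vtx_lt_vtx.2 h₂, vtx_lt_vtx.2 h₃⟩

theorem isStack_tt : IsStack {e ∈ E | typ e = .tt} := by
  rintro e ⟨he, het⟩ f ⟨hf, hft⟩ ⟨h₁, h₂, h₃⟩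
  exact hw.2.2 e he f hf _ (lowerIv_of_tt het) _ (lowerIv_of_tt hft)
    ⟨vtx_lt_vtx.2 h₁, vtx_lt_vtx.2 h₂, vtx_lt_vtx.2 h₃⟩

theorem not_lt_headEnd_lt (he : e ∈ E) (het : typ e = .hh) (hf : f ∈ E) (hft : (typ f).IsWrap) :
    ¬ (e.1 < headEnd typ f ∧ headEnd typ f < e.2) := fun h =>
  hw.2.1 e he f hf _ (upperIv_of_hh het) _ (upperIv_of_isWrap hft)
    ⟨vtx_lt_vtx.2 h.1, vtx_lt_vtx.2 h.2, vtx_lt_wpt _ _⟩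

theorem not_lt_tailEnd_lt (he : e ∈ E) (het : typ e = .tt) (hf : f ∈ E) (hft : (typ f).IsWrap) :
    ¬ (e.1 < tailEnd typ f ∧ tailEnd typ f < e.2) := fun h =>
  hw.2.2 e he f hf _ (lowerIv_of_tt het) _ (lowerIv_of_isWrap hft)
    ⟨vtx_lt_vtx.2 h.1, vtx_lt_vtx.2 h.2, vtx_lt_wpt _ _⟩

theorem headEnd_le_and_tailEnd_le (he : e ∈ E) (hf : f ∈ E) (hwe : (typ e).IsWrap)
    (hwf : (typ f).IsWrap) (hle : wrap e ≤ wrap f) :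
    headEnd typ f ≤ headEnd typ e ∧ tailEnd typ f ≤ tailEnd typ e := by
  rcases hle.lt_or_eq with hlt | heq
  · exact ⟨le_of_not_gt fun h => hw.2.1 e he f hf _ (upperIv_of_isWrap hwe) _
        (upperIv_of_isWrap hwf) ⟨vtx_lt_vtx.2 h, vtx_lt_wpt _ _, wpt_lt_wpt.2 hlt⟩,
      le_of_not_gt fun h => hw.2.2 e he f hf _ (lowerIv_of_isWrap hwe) _
        (lowerIv_of_isWrap hwf) ⟨vtx_lt_vtx.2 h, vtx_lt_wpt _ _, wpt_lt_wpt.2 hlt⟩⟩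
  · rw [hw.1 e he f hf hwe hwf heq]
    exact ⟨le_rfl, le_rfl⟩

end IsDequeWitness

end Witness

namespace IsDequeWitness

variable {typ : ℕ × ℕ → EdgeType} {wrap : ℕ × ℕ → ℕ} {S : Finset ℕ} {E : Finset (ℕ × ℕ)}
  (hw : IsDequeWitness (E : Set (ℕ × ℕ)) typ wrap)
include hw

theorem isWrapChain (hE : ∀ e ∈ E, e.1 ∈ S ∧ e.2 ∈ S ∧ e.1 < e.2) :
    IsWrapChain S (E.filter fun e => (typ e).IsWrap) (headEnd typ) (tailEnd typ) where
  mem e he := hE e (Finset.mem_filter.1 he).1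
  ends e _ := by unfold headEnd tailEnd; split_ifs <;> simp
  chain e he f hf := by
    obtain ⟨he, hwe⟩ := Finset.mem_filter.1 he
    obtain ⟨hf, hwf⟩ := Finset.mem_filter.1 hf
    rcases le_total (wrap e) (wrap f) with h | h
    · exact Or.inr (hw.headEnd_le_and_tailEnd_le he hf hwe hwf h)
    · exact Or.inl (hw.headEnd_le_and_tailEnd_le hf he hwf hwe h)

theorem isPage_hh : IsPage S (E.filter fun e => (typ e).IsWrap)
    (E.filter fun e => typ e = .hh ∧ IsChord S e) (headEnd typ) where
  isStack := hw.isStack_hh.mono fun e he => by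
    obtain ⟨he, het, -⟩ := Finset.mem_filter.1 he
    exact ⟨he, het⟩
  isChord e he := (Finset.mem_filter.1 he).2.2
  disjoint := Finset.disjoint_filter.2 fun _ _ h₁ h₂ => by
    obtain h | h := h₂ <;> simp [h₁.1] at h
  not_lt_head_lt e he f hf := hw.not_lt_headEnd_lt (Finset.mem_filter.1 he).1
    (Finset.mem_filter.1 he).2.1 (Finset.mem_filter.1 hf).1 (Finset.mem_filter.1 hf).2

theorem isPage_tt : IsPage S (E.filter fun e => (typ e).IsWrap)
    (E.filter fun e => typ e = .tt ∧ IsChord S e) (tailEnd typ) where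
  isStack := hw.isStack_tt.mono fun e he => by
    obtain ⟨he, het, -⟩ := Finset.mem_filter.1 he
    exact ⟨he, het⟩
  isChord e he := (Finset.mem_filter.1 he).2.2
  disjoint := Finset.disjoint_filter.2 fun _ _ h₁ h₂ => by
    obtain h | h := h₂ <;> simp [h₁.1] at h
  not_lt_head_lt e he f hf := hw.not_lt_tailEnd_lt (Finset.mem_filter.1 he).1
    (Finset.mem_filter.1 he).2.1 (Finset.mem_filter.1 hf).1 (Finset.mem_filter.1 hf).2

end IsDequeWitness

theorem IsDeque.card_filter_isChord_add_five_le {S : Finset ℕ} (hS : 3 ≤ S.card)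
    {E : Finset (ℕ × ℕ)} (hE : ∀ e ∈ E, e.1 ∈ S ∧ e.2 ∈ S ∧ e.1 < e.2)
    (hD : IsDeque (E : Set (ℕ × ℕ))) : (E.filter (IsChord S)).card + 5 ≤ 2 * S.card := by
  obtain ⟨typ, wrap, hw⟩ := hD
  set W := E.filter fun e => (typ e).IsWrap
  set H := E.filter fun e => typ e = .hh ∧ IsChord S e
  set T := E.filter fun e => typ e = .tt ∧ IsChord S e
  have hH : IsPage S W H (headEnd typ) := hw.isPage_hh
  have hT : IsPage S W T (tailEnd typ) := hw.isPage_tt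
  have hWC : IsWrapChain S W (headEnd typ) (tailEnd typ) := hw.isWrapChain hE
  have hsplit : (E.filter (IsChord S)).card ≤ H.card + T.card + (W.filter (IsChord S)).card := by
    refine (Finset.card_le_card fun e he => ?_).trans ((Finset.card_union_le _ _).trans
      (Nat.add_le_add_right (Finset.card_union_le H T) _))
    obtain ⟨he, hc⟩ := Finset.mem_filter.1 he
    rw [Finset.mem_union, Finset.mem_union]
    cases h : typ e
    · exact Or.inl (Or.inl (Finset.mem_filter.2 ⟨he, h, hc⟩))
    · exact Or.inl (Or.inr (Finset.mem_filter.2 ⟨he, h, hc⟩))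
    · exact Or.inr (Finset.mem_filter.2 ⟨Finset.mem_filter.2 ⟨he, Or.inl h⟩, hc⟩)
    · exact Or.inr (Finset.mem_filter.2 ⟨Finset.mem_filter.2 ⟨he, Or.inr h⟩, hc⟩)
  rcases W.eq_empty_or_nonempty with hW | hW
  · have hHT : Disjoint H T := Finset.disjoint_filter.2 fun _ _ h₁ h₂ => by simp [h₁.1] at h₂
    have := IsStack.card_add_card_add_five_le hS hH.isStack hT.isStack hH.isChord hT.isChord hHT
    rw [hW, Finset.filter_empty, Finset.card_empty] at hsplit
    omega
  · have := hWC.card_add_card_add_card_filter_add_five_le hS hW hH hT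
    omega

theorem card_filter_not_isChord_add_one_le {S : Finset ℕ} (hne : S.Nonempty) {E : Finset (ℕ × ℕ)}
    (hE : ∀ e ∈ E, e.1 ∈ S ∧ e.2 ∈ S ∧ e.1 < e.2) :
    (E.filter (¬ IsChord S ·)).card + 1 ≤ S.card := by
  have hmaps : ∀ e ∈ E.filter (¬ IsChord S ·), e.1 ∈ S.erase (S.max' hne) := fun e he => by
    obtain ⟨h₁, h₂, h⟩ := hE e (Finset.mem_filter.1 he).1
    exact Finset.mem_erase.2 ⟨(h.trans_le (S.le_max' _ h₂)).ne, h₁⟩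
  have hinj : Set.InjOn Prod.fst (E.filter (¬ IsChord S ·) : Set (ℕ × ℕ)) := by
    intro e he e' he' hfst
    obtain ⟨he, hne⟩ := Finset.mem_filter.1 he
    obtain ⟨he', hne'⟩ := Finset.mem_filter.1 he'
    obtain ⟨h₁, h₂, h⟩ := hE e he
    obtain ⟨h₁', h₂', h'⟩ := hE e' he'
    rcases lt_trichotomy e.2 e'.2 with hlt | heq | hlt
    · exact absurd ⟨h₁', h₂', e.2, h₂, by rw [← hfst]; exact h, hlt⟩ hne'
    · exact Prod.ext hfst heq
    · exact absurd ⟨h₁, h₂, e'.2, h₂', by rw [hfst]; exact h', hlt⟩ hne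
  have := Finset.card_le_card_of_injOn _ hmaps hinj
  rw [Finset.card_erase_of_mem (S.max'_mem hne)] at this
  have := hne.card_pos
  omega

def sortedPair {W : Type} (f : W ↪ ℕ) (s : Sym2 W) : ℕ × ℕ :=
  ((s.map f).inf, (s.map f).sup)

theorem sortedPair_injective {W : Type} (f : W ↪ ℕ) : Function.Injective (sortedPair f) :=
  fun _ _ h => Sym2.map.injective f.injective
    (Sym2.inf_eq_inf_and_sup_eq_sup.1 ⟨congrArg Prod.fst h, congrArg Prod.snd h⟩)

theorem sortedPair_mem_orderedEdges {W : Type} {G : SimpleGraph W} (f : W ↪ ℕ) {s : Sym2 W}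
    (hs : s ∈ G.edgeSet) : sortedPair f s ∈ orderedEdges G f := by
  induction s with | _ u v
  rw [SimpleGraph.mem_edgeSet] at hs
  wlog h : f u < f v generalizing u v
  · rw [Sym2.eq_swap]
    exact this v u hs.symm ((f.injective.ne (G.ne_of_adj hs)).symm.lt_of_le (not_lt.1 h))
  have hp : sortedPair f s(u, v) = (f u, f v) := by simp [sortedPair, h.le]
  exact ⟨u, v, hs, by rw [hp], by rw [hp], by rw [hp]; exact h⟩

theorem mem_image_of_mem_orderedEdges {W : Type} [Fintype W] {G : SimpleGraph W} {f : W ↪ ℕ}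
    {p : ℕ × ℕ} (hp : p ∈ orderedEdges G f) :
    p.1 ∈ Finset.univ.image f ∧ p.2 ∈ Finset.univ.image f ∧ p.1 < p.2 := by
  obtain ⟨u, v, -, hu, hv, h⟩ := hp
  exact ⟨Finset.mem_image.2 ⟨u, Finset.mem_univ u, hu⟩,
    Finset.mem_image.2 ⟨v, Finset.mem_univ v, hv⟩, h⟩

theorem deque_layout_density_general (n k : ℕ) (hn : 3 ≤ n)
    (V : Type) [Fintype V] (G : SimpleGraph V)
    [DecidableRel G.Adj] (hV : Fintype.card V = n)
    (h : HasDequeLayout G k) :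
    (G.edgeFinset.card : ℤ) ≤ (2 * k + 1) * n - 5 * k - 1 := by
  obtain ⟨f, c, hc⟩ := h
  set S := Finset.univ.image f
  have hS : S.card = n := by
    rw [Finset.card_image_of_injective _ f.injective, Finset.card_univ, hV]
  set E := G.edgeFinset.image (sortedPair f)
  have hEG : ∀ p ∈ E, p ∈ orderedEdges G f := fun p hp => by
    obtain ⟨s, hs, rfl⟩ := Finset.mem_image.1 hp
    exact sortedPair_mem_orderedEdges f (SimpleGraph.mem_edgeFinset.1 hs)
  have hES : ∀ p ∈ E, p.1 ∈ S ∧ p.2 ∈ S ∧ p.1 < p.2 := fun p hp =>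
    mem_image_of_mem_orderedEdges (hEG p hp)
  have hspine := card_filter_not_isChord_add_one_le (Finset.card_pos.1 (by omega)) hES
  have hchords : (E.filter (IsChord S)).card ≤ (2 * n - 5) * k := by
    refine (Finset.card_le_mul_card_image_of_maps_to (fun p _ => Finset.mem_univ (c p))
      (2 * n - 5) fun i _ => ?_).trans_eq (by simp)
    have := IsDeque.card_filter_isChord_add_five_le (hS ▸ hn)
      (fun p hp => hES p (Finset.mem_filter.1 hp).1)
      ((hc i).mono fun p hp => ⟨hEG p (Finset.mem_filter.1 hp).1, (Finset.mem_filter.1 hp).2⟩)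
    rw [Finset.filter_comm]
    omega
  have := Finset.card_filter_add_card_filter_not (s := E) (IsChord S)
  rw [← Finset.card_image_of_injective _ (sortedPair_injective f)]
  zify [show 5 ≤ 2 * n by omega] at hchords hspine this hS
  linarith

/-- Let `n ≥ 3` and `k ≥ 1`. A finite simple graph with `n` vertices admitting
a deque layout with `k` deques has at most `(2k+1)n - 5k - 1` edges. -/
theorem deque_layout_density (n k : ℕ) (hn : 3 ≤ n) (hk : 1 ≤ k)
    (V : Type) [Fintype V] [DecidableEq V] (G : SimpleGraph V)
    [DecidableRel G.Adj] (hV : Fintype.card V = n)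
    (h : HasDequeLayout G k) :
    (G.edgeFinset.card : ℤ) ≤ (2 * k + 1) * n - 5 * k - 1 :=
  deque_layout_density_general n k hn V G hV h

end DequePaper
end

section
/- Let n ≥ 3 and 1 ≤ k ≤ n. A finite simple graph with n vertices admitting a rique layout with k riques has at most (2n+2)k − k² + (n − 3) edges. -/
/-!
Put the vertices at the positions `0, …, n - 1`. At most `n - 1` edges have the form `(a, a + 1)`,
and at most `k²` edges `(a, b)` have `a + 2 ≤ b` and `a + b ≤ 2k`. Each rique contains at most
`2B - τ` of the remaining edges, where `B = n - 1` bounds the right ends and `τ = 2k + 1` the sums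
`a + b`. If the rique has no nested pair, distinct edges have distinct sums in `[τ, 2B)`. Otherwise
take the nested edge `s` with the leftmost right end, and the rightmost left end among those. The
rique condition forbids left ends strictly inside `s`, so gluing the positions `s.1 + 1` and
`s.1 + 2` keeps a rique on one position fewer. This loses at most two edges, and a second one only
when the lower bound `τ` need not drop, so induction on `B` applies.
-/

namespace DequePaper

variable {V : Type} [LinearOrder V]

open Finset

section Order

variable {V W : Type} [LinearOrder V] [LinearOrder W]

theorem IsRique.mono {E F : Set (V × V)} (hE : IsRique E) (hFE : F ⊆ E) : IsRique F :=
  fun ⟨a, a', b, b', c, c', ha, hb, hc, h⟩ => hE ⟨a, a', b, b', c, c', hFE ha, hFE hb, hFE hc, h⟩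

theorem IsRique.image_prodMap {E : Set (V × V)} (hE : IsRique E) {φ : V → W} (hφ : Monotone φ) :
    IsRique (Prod.map φ φ '' E) := by
  rintro ⟨x, x', y, y', z, z', ⟨a, ha, ha'⟩, ⟨b, hb, hb'⟩, ⟨c, hc, hc'⟩, h₁, h₂, h₃, h₄, h₅⟩
  simp only [Prod.map, Prod.mk.injEq] at ha' hb' hc'
  obtain ⟨rfl, rfl⟩ := ha'
  obtain ⟨rfl, rfl⟩ := hb'
  obtain ⟨rfl, rfl⟩ := hc'
  exact hE ⟨a.1, a.2, b.1, b.2, c.1, c.2, ha, hb, hc, hφ.reflect_lt h₁, hφ.reflect_lt h₂,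
    hφ.reflect_lt h₃, hφ.reflect_lt h₄, hφ.reflect_lt h₅⟩

def IsInnermostNested (R : Finset (V × V)) (s : V × V) : Prop :=
  s ∈ R ∧ (∃ t ∈ R, t.1 < s.1 ∧ s.2 < t.2) ∧
    ∀ e ∈ R, ∀ e' ∈ R, e'.1 < e.1 → e.2 < e'.2 → s.2 < e.2 ∨ (e.2 = s.2 ∧ e.1 ≤ s.1)

theorem exists_isInnermostNested {R : Finset (V × V)} (h : ¬ IsQueue (R : Set (V × V))) :
    ∃ s, IsInnermostNested R s := by
  classical
  set S := R.filter fun e => ∃ t ∈ R, t.1 < e.1 ∧ e.2 < t.2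
  have hS : S.Nonempty := by
    simp only [IsQueue, Nest, not_forall, not_not] at h
    obtain ⟨t, ht, e, he, h₁, -, h₃⟩ := h
    exact ⟨e, mem_filter.2 ⟨he, t, ht, h₁, h₃⟩⟩
  obtain ⟨s, hs, hmin⟩ := S.exists_min_image (fun e => toLex (e.2, OrderDual.toDual e.1)) hS
  obtain ⟨hsR, hst⟩ := mem_filter.1 hs
  refine ⟨s, hsR, hst, fun e he e' he' h₁ h₂ => ?_⟩
  rcases Prod.Lex.toLex_le_toLex.1 (hmin e (mem_filter.2 ⟨he, e', he', h₁, h₂⟩)) with h | ⟨h, h'⟩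
  · exact .inl h
  · exact .inr ⟨h.symm, OrderDual.toDual_le_toDual.1 h'⟩

namespace IsInnermostNested

variable {R : Finset (V × V)} {s e : V × V}

theorem snd_le_of_covered (hs : IsInnermostNested R s) (he : e ∈ R) {e' : V × V} (he' : e' ∈ R)
    (h₁ : e'.1 < e.1) (h₂ : e.2 < e'.2) : s.2 ≤ e.2 := by
  rcases hs.2.2 e he e' he' h₁ h₂ with h | h
  · exact h.le
  · exact h.1.ge

theorem le_snd_of_fst_eq (hs : IsInnermostNested R s) (he : e ∈ R) (h : e.1 = s.1) :
    s.2 ≤ e.2 := by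
  obtain ⟨-, ⟨t, ht, hts₁, hts₂⟩, hmin⟩ := hs
  by_contra! h₂
  rcases hmin e he t ht (h ▸ hts₁) (h₂.trans hts₂) with h₃ | h₃ <;> order

theorem fst_le_or_le_fst (hs : IsInnermostNested R s) (hR : IsRique (R : Set (V × V)))
    (he : e ∈ R) : e.1 ≤ s.1 ∨ s.2 ≤ e.1 := by
  obtain ⟨hsR, ⟨t, ht, hts₁, hts₂⟩, hmin⟩ := hs
  by_contra! h
  rcases lt_trichotomy e.2 s.2 with h₂ | h₂ | h₂
  · rcases hmin e he s hsR h.1 h₂ with h₃ | h₃ <;> order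
  · rcases hmin e he t ht (hts₁.trans h.1) (h₂ ▸ hts₂) with h₃ | h₃ <;> order
  · exact hR ⟨t.1, t.2, s.1, s.2, e.1, e.2, ht, hsR, he, hts₁, h.1, h.2, hts₂, h₂⟩

end IsInnermostNested

end Order

theorem IsQueue.card_le_two_mul_sub {R : Finset (ℕ × ℕ)} {B τ : ℕ}
    (hR : IsQueue (R : Set (ℕ × ℕ))) (hlt : ∀ p ∈ R, p.1 < p.2) (hB : ∀ p ∈ R, p.2 ≤ B)
    (hτ : ∀ p ∈ R, τ ≤ p.1 + p.2) : #R ≤ 2 * B - τ := by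
  have hinj : Set.InjOn (fun p : ℕ × ℕ => p.1 + p.2) R := by
    intro p hp q hq hpq
    have hp' := hlt p hp
    have hq' := hlt q hq
    simp only at hpq
    rcases lt_trichotomy p.1 q.1 with h | h | h
    · exact (hR p hp q hq ⟨h, hq', by omega⟩).elim
    · exact Prod.ext h (by omega)
    · exact (hR q hq p hp ⟨h, hp', by omega⟩).elim
  have hmaps : Set.MapsTo (fun p : ℕ × ℕ => p.1 + p.2) R (Ico τ (2 * B)) := by
    intro p hp
    have := hlt p hp
    have := hB p hp
    have := hτ p hp
    simp only [coe_Ico, Set.mem_Ico]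
    omega
  simpa using card_le_card_of_injOn _ hmaps hinj

def mergeSucc (m x : ℕ) : ℕ := if x ≤ m then x else x - 1

theorem mergeSucc_monotone (m : ℕ) : Monotone (mergeSucc m) := by
  intro a b hab
  unfold mergeSucc
  split_ifs <;> omega

theorem eq_of_mergeSucc_eq {m x y : ℕ} (hx : x ≠ m) (hy : y ≠ m)
    (h : mergeSucc m x = mergeSucc m y) : x = y := by
  unfold mergeSucc at h
  split_ifs at h <;> omega

namespace IsInnermostNested

variable {R : Finset (ℕ × ℕ)} {s e : ℕ × ℕ} {τ : ℕ}

theorem mergeSucc_add_two_le (hs : IsInnermostNested R s) (hR : IsRique (R : Set (ℕ × ℕ)))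
    (hlong : ∀ p ∈ R, p.1 + 2 ≤ p.2) (he : e ∈ R) (hne : e ≠ s) :
    mergeSucc (s.1 + 1) e.1 + 2 ≤ mergeSucc (s.1 + 1) e.2 := by
  have h₁ := hs.fst_le_or_le_fst hR he
  have h₂ := (eq_or_ne e.1 s.1).imp_left (hs.le_snd_of_fst_eq he)
  have h₃ : e.1 ≠ s.1 ∨ e.2 ≠ s.2 := by
    contrapose! hne
    exact Prod.ext hne.1 hne.2
  have := hlong e he
  have := hlong s hs.1
  unfold mergeSucc
  split_ifs <;> omega

theorem le_mergeSucc_add_succ (hs : IsInnermostNested R s) (hR : IsRique (R : Set (ℕ × ℕ)))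
    (hlong : ∀ p ∈ R, p.1 + 2 ≤ p.2) (hτ : ∀ p ∈ R, τ ≤ p.1 + p.2) (he : e ∈ R) :
    τ ≤ mergeSucc (s.1 + 1) e.1 + mergeSucc (s.1 + 1) e.2 + 1 := by
  have := hs.fst_le_or_le_fst hR he
  have := hlong e he
  have := hlong s hs.1
  have := hτ s hs.1
  have := hτ e he
  unfold mergeSucc
  split_ifs <;> omega

/-- An edge reaching past `s.1 + 1` from the left of `f` would cover `f`, whose right end precedes
`s.2`; so such edges have a larger sum than `f`, and the unit they lose under gluing is spare. -/
theorem le_mergeSucc_add (hs : IsInnermostNested R s) (hR : IsRique (R : Set (ℕ × ℕ)))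
    (hlong : ∀ p ∈ R, p.1 + 2 ≤ p.2) (hτ : ∀ p ∈ R, τ ≤ p.1 + p.2)
    (hend : ∃ f ∈ R, f.2 = s.1 + 1) (he : e ∈ R) :
    τ ≤ mergeSucc (s.1 + 1) e.1 + mergeSucc (s.1 + 1) e.2 := by
  obtain ⟨f, hf, hf₂⟩ := hend
  have := hlong s hs.1
  have hcov : ¬ (e.1 < f.1 ∧ f.2 < e.2) := fun h => by
    have := hs.snd_le_of_covered hf he h.1 h.2
    omega
  have := hs.fst_le_or_le_fst hR he
  have := hlong e he
  have := hτ s hs.1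
  have := hτ e he
  have := hτ f hf
  unfold mergeSucc
  split_ifs <;> omega

theorem injOn_mergeSucc (hs : IsInnermostNested R s) (hR : IsRique (R : Set (ℕ × ℕ)))
    (hlong : ∀ p ∈ R, p.1 + 2 ≤ p.2) :
    Set.InjOn (Prod.map (mergeSucc (s.1 + 1)) (mergeSucc (s.1 + 1)))
      ↑(R.filter fun e => ¬ (e.2 = s.1 + 2 ∧ (e.1, s.1 + 1) ∈ R)) := by
  intro e he e' he' h
  simp only [coe_filter, Set.mem_ofPred_eq] at he he'
  simp only [Prod.map, Prod.mk.injEq] at h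
  have := hlong s hs.1
  have hfst : ∀ {a}, a ∈ R → a.1 ≠ s.1 + 1 := fun ha => by
    have := hs.fst_le_or_le_fst hR ha
    omega
  have h₁ : e.1 = e'.1 := eq_of_mergeSucc_eq (hfst he.1) (hfst he'.1) h.1
  have hsnd : ∀ {a b : ℕ × ℕ}, a ∈ R → b.1 = a.1 → ¬ (b.2 = s.1 + 2 ∧ (b.1, s.1 + 1) ∈ R) →
      a.2 ≠ s.1 + 1 ∨ b.2 ≠ s.1 + 2 := by
    intro a b ha hab hb
    by_contra! h
    exact hb ⟨h.2, by rw [hab, ← h.1]; exact ha⟩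
  have := hsnd he.1 h₁.symm he'.2
  have := hsnd he'.1 h₁ he.2
  have h₂ := h.2
  refine Prod.ext h₁ ?_
  unfold mergeSucc at h₂
  split_ifs at h₂ <;> omega

theorem card_le_card_image_add_one (hs : IsInnermostNested R s)
    (hR : IsRique (R : Set (ℕ × ℕ))) (hlong : ∀ p ∈ R, p.1 + 2 ≤ p.2) :
    #R ≤ #(R.image (Prod.map (mergeSucc (s.1 + 1)) (mergeSucc (s.1 + 1)))) + 1 := by
  set P : ℕ × ℕ → Prop := fun e => e.2 = s.1 + 2 ∧ (e.1, s.1 + 1) ∈ R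
  have hP : #(R.filter P) ≤ 1 := by
    have := hlong s hs.1
    have hcov : ∀ a ∈ R.filter P, ∀ b ∈ R.filter P, ¬ a.1 < b.1 := fun a ha b hb hab => by
      have := hs.snd_le_of_covered (mem_filter.1 hb).2.2 (mem_filter.1 ha).1 hab
        (by simp [(mem_filter.1 ha).2.1])
      omega
    refine card_le_one.2 fun a ha b hb => Prod.ext ?_ ?_
    · have := hcov a ha b hb
      have := hcov b hb a ha
      omega
    · rw [(mem_filter.1 ha).2.1, (mem_filter.1 hb).2.1]
  calc #R = #((R.filter fun e => ¬ P e).image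
          (Prod.map (mergeSucc (s.1 + 1)) (mergeSucc (s.1 + 1)))) + #(R.filter P) := by
        rw [card_image_of_injOn (hs.injOn_mergeSucc hR hlong), add_comm,
          card_filter_add_card_filter_not]
    _ ≤ _ := add_le_add (card_le_card (image_subset_image (filter_subset _ _))) hP

theorem card_image_mergeSucc (hs : IsInnermostNested R s) (hR : IsRique (R : Set (ℕ × ℕ)))
    (hlong : ∀ p ∈ R, p.1 + 2 ≤ p.2) (hend : ∀ f ∈ R, f.2 ≠ s.1 + 1) :
    #(R.image (Prod.map (mergeSucc (s.1 + 1)) (mergeSucc (s.1 + 1)))) = #R :=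
  card_image_of_injOn <| (hs.injOn_mergeSucc hR hlong).mono fun e he => by
    rw [coe_filter]
    exact ⟨he, fun h => hend _ h.2 rfl⟩

end IsInnermostNested

/-- Glue the positions `s.1 + 1` and `s.1 + 2` for an innermost nested edge `s`. The edges lost
are `s`, if it becomes too short, and, only if some edge ends at `s.1 + 1`, one edge merging with a
parallel one; exactly in that case the sums need not drop. -/
theorem IsRique.exists_contraction {R : Finset (ℕ × ℕ)} {B τ : ℕ} (hR : IsRique (R : Set (ℕ × ℕ)))
    (hlong : ∀ p ∈ R, p.1 + 2 ≤ p.2) (hB : ∀ p ∈ R, p.2 ≤ B) (hτ : ∀ p ∈ R, τ ≤ p.1 + p.2)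
    (hq : ¬ IsQueue (R : Set (ℕ × ℕ))) :
    ∃ (B' : ℕ) (R' : Finset (ℕ × ℕ)) (τ' : ℕ), B = B' + 1 ∧ IsRique (R' : Set (ℕ × ℕ)) ∧
      (∀ p ∈ R', p.1 + 2 ≤ p.2) ∧ (∀ p ∈ R', p.2 ≤ B') ∧ (∀ p ∈ R', τ' ≤ p.1 + p.2) ∧
      τ' ≤ 2 * B' ∧ #R + τ ≤ #R' + τ' + 2 := by
  obtain ⟨s, hs⟩ := exists_isInnermostNested hq
  obtain ⟨t, ht, -, hts⟩ := hs.2.1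
  have := hB t ht
  have := hlong s hs.1
  have := hτ s hs.1
  set Φ := Prod.map (mergeSucc (s.1 + 1)) (mergeSucc (s.1 + 1))
  set R' := (R.image Φ).filter fun p => p.1 + 2 ≤ p.2
  have hR' : IsRique (R' : Set (ℕ × ℕ)) := by
    refine (hR.image_prodMap (mergeSucc_monotone (s.1 + 1))).mono ?_
    rw [← coe_image]
    exact coe_subset.2 (filter_subset _ _)
  have hlong' : ∀ p ∈ R', p.1 + 2 ≤ p.2 := fun p hp => (mem_filter.1 hp).2
  have hpre : ∀ p ∈ R', ∃ e ∈ R, Φ e = p := fun p hp => mem_image.1 (mem_filter.1 hp).1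
  have hB' : ∀ p ∈ R', p.2 ≤ B - 1 := by
    intro p hp
    obtain ⟨e, he, rfl⟩ := hpre p hp
    have := hB e he
    simp only [Φ, Prod.map_snd, mergeSucc]
    split_ifs <;> omega
  have himage : #(R.image Φ) ≤ #R' + 1 := by
    refine (card_le_card fun p hp => ?_).trans (card_insert_le (Φ s) R')
    obtain ⟨e, he, rfl⟩ := mem_image.1 hp
    rcases eq_or_ne e s with rfl | hne
    · exact mem_insert_self _ _
    · exact mem_insert_of_mem (mem_filter.2 ⟨hp, hs.mergeSucc_add_two_le hR hlong he hne⟩)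
  by_cases hend : ∃ f ∈ R, f.2 = s.1 + 1
  · refine ⟨B - 1, R', τ, by omega, hR', hlong', hB', fun p hp => ?_, by omega, ?_⟩
    · obtain ⟨e, he, rfl⟩ := hpre p hp
      exact hs.le_mergeSucc_add hR hlong hτ hend he
    · have : #R ≤ #(R.image Φ) + 1 := hs.card_le_card_image_add_one hR hlong
      omega
  · push Not at hend
    refine ⟨B - 1, R', τ - 1, by omega, hR', hlong', hB', fun p hp => ?_, by omega, ?_⟩
    · obtain ⟨e, he, rfl⟩ := hpre p hp
      have := hs.le_mergeSucc_add_succ hR hlong hτ he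
      simp only [Φ, Prod.map_fst, Prod.map_snd]
      omega
    · have : #(R.image Φ) = #R := hs.card_image_mergeSucc hR hlong hend
      omega

theorem IsRique.card_le_two_mul_sub {R : Finset (ℕ × ℕ)} {B τ : ℕ}
    (hR : IsRique (R : Set (ℕ × ℕ))) (hlong : ∀ p ∈ R, p.1 + 2 ≤ p.2) (hB : ∀ p ∈ R, p.2 ≤ B)
    (hτ : ∀ p ∈ R, τ ≤ p.1 + p.2) : #R ≤ 2 * B - τ := by
  induction B using Nat.strong_induction_on generalizing R τ with
  | _ B ih =>
    by_cases hq : IsQueue (R : Set (ℕ × ℕ))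
    · exact hq.card_le_two_mul_sub (fun p hp => by have := hlong p hp; omega) hB hτ
    obtain ⟨B', R', τ', rfl, hR', hlong', hB', hτ', hτB', hcard⟩ :=
      hR.exists_contraction hlong hB hτ hq
    have := ih B' (by omega) hR' hlong' hB' hτ'
    omega

theorem card_filter_snd_eq_succ_le {n : ℕ} {E : Finset (ℕ × ℕ)} (hE : ∀ p ∈ E, p.2 < n) :
    #(E.filter fun p => p.2 = p.1 + 1) ≤ n - 1 := by
  refine (card_le_card_of_injOn Prod.fst (t := range (n - 1)) (fun p hp => ?_)
    (fun p hp q hq h => ?_)).trans_eq (card_range _)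
  · simp only [mem_coe, mem_filter, mem_range] at hp ⊢
    have := hE p hp.1
    omega
  · simp only [mem_coe, mem_filter] at hp hq
    exact Prod.ext h (by omega)

/-- Even sums `2m` go to the lower triangle of the `k × k` square, odd sums `2m + 1` to the strict
upper triangle. -/
theorem card_filter_add_le_two_mul_le_sq (k : ℕ) (E : Finset (ℕ × ℕ)) :
    #(E.filter fun p => p.1 + 2 ≤ p.2 ∧ p.1 + p.2 ≤ 2 * k) ≤ k ^ 2 := by
  let g : ℕ × ℕ → ℕ × ℕ := fun p =>
    if (p.1 + p.2) % 2 = 0 then ((p.1 + p.2) / 2 - 1, p.1) else (p.1, (p.1 + p.2) / 2)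
  refine (card_le_card_of_injOn g (t := range k ×ˢ range k) (fun p hp => ?_)
    (fun p hp q hq h => ?_)).trans_eq (by simp [sq])
  · simp only [mem_coe, mem_filter, mem_product, mem_range, g] at hp ⊢
    split_ifs <;> omega
  · simp only [mem_coe, mem_filter, g] at hp hq h
    split_ifs at h <;> simp only [Prod.mk.injEq] at h <;> exact Prod.ext (by omega) (by omega)

theorem card_filter_two_mul_lt_add_le {n k : ℕ} {E : Finset (ℕ × ℕ)} (col : ℕ × ℕ → Fin k)
    (hE : ∀ p ∈ E, p.2 < n) (hcol : ∀ i, IsRique {p | p ∈ E ∧ col p = i}) :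
    #(E.filter fun p => p.1 + 2 ≤ p.2 ∧ 2 * k < p.1 + p.2) ≤
      k * (2 * (n - 1) - (2 * k + 1)) := by
  set L := E.filter fun p => p.1 + 2 ≤ p.2 ∧ 2 * k < p.1 + p.2
  have hclass : ∀ i, #(L.filter fun p => col p = i) ≤ 2 * (n - 1) - (2 * k + 1) := by
    intro i
    refine IsRique.card_le_two_mul_sub ((hcol i).mono fun p hp => ?_) (fun p hp => ?_)
      (fun p hp => ?_) (fun p hp => ?_) <;>
      simp only [L, coe_filter, mem_filter, Set.mem_ofPred_eq] at hp ⊢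
    · exact ⟨hp.1.1, hp.2⟩
    · exact hp.1.2.1
    · have := hE p hp.1.1
      omega
    · omega
  calc #L = ∑ i, #(L.filter fun p => col p = i) :=
        card_eq_sum_card_fiberwise fun p _ => mem_univ (col p)
    _ ≤ ∑ _i : Fin k, (2 * (n - 1) - (2 * k + 1)) := sum_le_sum fun i _ => hclass i
    _ = k * (2 * (n - 1) - (2 * k + 1)) := by simp

theorem card_le_of_isRique_coloring {n k : ℕ} {E : Finset (ℕ × ℕ)} (col : ℕ × ℕ → Fin k)
    (hE : ∀ p ∈ E, p.1 < p.2 ∧ p.2 < n) (hcol : ∀ i, IsRique {p | p ∈ E ∧ col p = i}) :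
    #E ≤ (n - 1) + k ^ 2 + k * (2 * (n - 1) - (2 * k + 1)) := by
  have hsub : E ⊆ (E.filter fun p => p.2 = p.1 + 1) ∪
      (E.filter fun p => p.1 + 2 ≤ p.2 ∧ p.1 + p.2 ≤ 2 * k) ∪
      (E.filter fun p => p.1 + 2 ≤ p.2 ∧ 2 * k < p.1 + p.2) := by
    intro p hp
    have := hE p hp
    simp only [mem_union, mem_filter, hp, true_and]
    omega
  calc #E ≤ _ := card_le_card hsub
    _ ≤ _ := (card_union_le _ _).trans (add_le_add_left (card_union_le _ _) _)
    _ ≤ _ := add_le_add (add_le_add (card_filter_snd_eq_succ_le fun p hp => (hE p hp).2)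
        (card_filter_add_le_two_mul_le_sq k E))
        (card_filter_two_mul_lt_add_le col (fun p hp => (hE p hp).2) hcol)

section Layout

variable {W : Type} [Fintype W] {G : SimpleGraph W}

/-- Positions are replaced by their ranks; the coloring is pulled back along the inverse
relabelling. -/
theorem HasLayout.exists_lt_card {k : ℕ} {P : Set (ℕ × ℕ) → Prop}
    (hP : ∀ (E F : Set (ℕ × ℕ)) (ρ : ℕ → ℕ), Monotone ρ → P E → F ⊆ Prod.map ρ ρ '' E → P F)
    (h : HasLayout G k P) :
    ∃ (f : W ↪ ℕ) (c : ℕ × ℕ → Fin k), (∀ w, f w < Fintype.card W) ∧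
      ∀ i : Fin k, P {p | p ∈ orderedEdges G f ∧ c p = i} := by
  classical
  obtain ⟨f, c, hc⟩ := h
  rcases isEmpty_or_nonempty W with hW | hW
  · exact ⟨f, c, isEmptyElim, hc⟩
  let ρ : ℕ → ℕ := fun m => #(univ.filter fun w => f w < m)
  have hρ : Monotone ρ := fun a b hab => card_le_card fun w hw => by
    simp only [mem_filter, mem_univ, true_and] at hw ⊢
    omega
  have hρlt : ∀ {a b : W}, f a < f b → ρ (f a) < ρ (f b) := fun hab =>
    card_lt_card <| (ssubset_iff_of_subset fun w hw => by
      simp only [mem_filter, mem_univ, true_and] at hw ⊢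
      omega).2 ⟨_, by simpa using hab, by simp⟩
  let g : W ↪ ℕ := ⟨fun w => ρ (f w), fun a b hab => by
    by_contra hne
    rcases (f.injective.ne hne).lt_or_gt with h | h
    · exact (hρlt h).ne hab
    · exact (hρlt h).ne' hab⟩
  have hg : ∀ w, g w < Fintype.card W := fun w =>
    card_lt_card (filter_ssubset.2 ⟨w, mem_univ w, lt_irrefl _⟩)
  have hgf : ∀ w, f (Function.invFun g (g w)) = f w := fun w =>
    congrArg f (Function.leftInverse_invFun g.injective w)
  refine ⟨g, fun p => c (f (Function.invFun g p.1), f (Function.invFun g p.2)), hg,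
    fun i => hP _ _ ρ hρ (hc i) ?_⟩
  rintro ⟨x, y⟩ ⟨⟨u, v, huv, rfl, rfl, hlt⟩, hi⟩
  refine ⟨(f u, f v), ⟨⟨u, v, huv, rfl, rfl, hρ.reflect_lt hlt⟩, ?_⟩, rfl⟩
  simpa only [hgf] using hi

variable [DecidableRel G.Adj]

def orderedEdgeFinset (G : SimpleGraph W) [DecidableRel G.Adj] (f : W ↪ ℕ) : Finset (ℕ × ℕ) :=
  (univ.filter fun q : W × W => G.Adj q.1 q.2 ∧ f q.1 < f q.2).map (f.prodMap f)

theorem coe_orderedEdgeFinset (f : W ↪ ℕ) :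
    (orderedEdgeFinset G f : Set (ℕ × ℕ)) = orderedEdges G f := by
  ext ⟨a, b⟩
  simp only [orderedEdgeFinset, orderedEdges, coe_map, coe_filter, mem_univ, true_and,
    Function.Embedding.coe_prodMap, Set.mem_image, Set.mem_ofPred_eq, Prod.exists, Prod.map_apply,
    Prod.mk.injEq]
  constructor
  · rintro ⟨u, v, ⟨huv, hlt⟩, rfl, rfl⟩
    exact ⟨u, v, huv, rfl, rfl, hlt⟩
  · rintro ⟨u, v, huv, rfl, rfl, hlt⟩
    exact ⟨u, v, ⟨huv, hlt⟩, rfl, rfl⟩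

theorem card_orderedEdgeFinset [DecidableEq W] (f : W ↪ ℕ) :
    #(orderedEdgeFinset G f) = #G.edgeFinset := by
  have hswap : #(univ.filter fun q : W × W => G.Adj q.1 q.2 ∧ f q.2 < f q.1) =
      #(univ.filter fun q : W × W => G.Adj q.1 q.2 ∧ f q.1 < f q.2) :=
    card_nbij' Prod.swap Prod.swap (fun q hq => by simpa [G.adj_comm] using hq)
      (fun q hq => by simpa [G.adj_comm] using hq) (fun _ _ => rfl) (fun _ _ => rfl)
  have hneg : (univ.filter fun q : W × W => G.Adj q.1 q.2 ∧ ¬ f q.1 < f q.2) =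
      univ.filter fun q : W × W => G.Adj q.1 q.2 ∧ f q.2 < f q.1 :=
    filter_congr fun q _ => and_congr_right fun hq =>
      ⟨fun h => lt_of_le_of_ne (not_lt.1 h) (f.injective.ne hq.ne.symm), fun h => h.not_gt⟩
  have hsplit := card_filter_add_card_filter_not
    (s := univ.filter fun q : W × W => G.Adj q.1 q.2) (fun q => f q.1 < f q.2)
  rw [filter_filter, filter_filter, hneg, hswap] at hsplit
  have htwice : 2 * #G.edgeFinset = #(univ.filter fun q : W × W => G.Adj q.1 q.2) :=
    G.two_mul_card_edgeFinset
  rw [orderedEdgeFinset, card_map]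
  omega

end Layout

theorem rique_layout_density_general (n k : ℕ) (hk1 : 1 ≤ k)
    (hkn : k ≤ n) (V : Type) [Fintype V] [DecidableEq V] (G : SimpleGraph V)
    [DecidableRel G.Adj] (hV : Fintype.card V = n)
    (h : HasRiqueLayout G k) :
    (G.edgeFinset.card : ℤ) ≤ (2 * n + 2) * k - k ^ 2 + (n - 3) := by
  obtain ⟨f, c, hf, hc⟩ :=
    HasLayout.exists_lt_card (fun E F ρ hρ hE hF => (hE.image_prodMap hρ).mono hF) h
  rw [← coe_orderedEdgeFinset] at hc
  have hcount := card_le_of_isRique_coloring c (E := orderedEdgeFinset G f) (n := n)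
    (fun p hp => by
      rw [← mem_coe, coe_orderedEdgeFinset] at hp
      obtain ⟨u, v, -, -, hv, hlt⟩ := hp
      exact ⟨hlt, hv ▸ hV ▸ hf v⟩) hc
  rw [card_orderedEdgeFinset] at hcount
  have hbig : k * (2 * (n - 1) - (2 * k + 1)) ≤ k * (2 * (n - k)) :=
    Nat.mul_le_mul_left k (by omega)
  have hle : #G.edgeFinset ≤ (n - 1) + k ^ 2 + k * (2 * (n - k)) := by omega
  zify [hkn, (by omega : 1 ≤ n)] at hle
  linarith

/-- Let `n ≥ 3` and `1 ≤ k ≤ n`. A finite simple graph with `n` vertices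
admitting a rique layout with `k` riques has at most `(2n+2)k - k² + (n-3)`
edges. -/
theorem rique_layout_density (n k : ℕ) (hn : 3 ≤ n) (hk1 : 1 ≤ k)
    (hkn : k ≤ n) (V : Type) [Fintype V] [DecidableEq V] (G : SimpleGraph V)
    [DecidableRel G.Adj] (hV : Fintype.card V = n)
    (h : HasRiqueLayout G k) :
    (G.edgeFinset.card : ℤ) ≤ (2 * n + 2) * k - k ^ 2 + (n - 3) :=
  rique_layout_density_general n k hk1 hkn V G hV h

end DequePaper
end

section
/- Let E be a deque with respect to a vertex order ≺, with a witnessing type assignment. Then the edges of E assigned type ht are pairwise non-nesting (they form a queue with respect to ≺), and likewise the edges of E assigned type th are pairwise non-nesting. -/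
namespace DequePaper

variable {V : Type} [LinearOrder V]

/-- Let `E` be a deque with respect to a vertex order, with a witnessing type
assignment. Then the edges of `E` assigned type ht are pairwise non-nesting
(they form a queue), and likewise the edges of `E` assigned type th are
pairwise non-nesting. -/
theorem deque_ht_th_queue (V : Type) [LinearOrder V] (E : Set (V × V))
    (hE : ∀ p ∈ E, p.1 < p.2) (typ : V × V → EdgeType) (wrap : V × V → ℕ)
    (h : IsDequeWitness E typ wrap) :
    IsQueue {e ∈ E | typ e = EdgeType.ht} ∧
    IsQueue {e ∈ E | typ e = EdgeType.th} := by
  obtain ⟨hinj, hup, hlo⟩ := h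
  have vlt : ∀ a b : V, a < b → (vtx a : Ext V) < vtx b := fun a b hab =>
    Sum.Lex.inl_lt_inl_iff.mpr hab
  have vw : ∀ (a : V) (m : ℕ), (vtx a : Ext V) < wpt m := fun a m =>
    Sum.Lex.inl_lt_inr a m
  have wlt : ∀ m n : ℕ, m < n → (wpt m : Ext V) < wpt n := fun m n hmn =>
    Sum.Lex.inr_lt_inr_iff.mpr hmn
  constructor
  · rintro e ⟨heE, het⟩ e' ⟨he'E, he't⟩ ⟨h1, h2, h3⟩
    have hne : e ≠ e' := by
      rintro rfl; exact lt_irrefl _ h1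
    have hwne : wrap e ≠ wrap e' := fun hw =>
      hne (hinj e heE e' he'E (Or.inl het) (Or.inl he't) hw)
    rcases lt_or_gt_of_ne hwne with hw | hw
    · exact hup e heE e' he'E (vtx e.1, wpt (wrap e)) (by simp [upperIv, het])
        (vtx e'.1, wpt (wrap e')) (by simp [upperIv, he't])
        ⟨vlt _ _ h1, vw _ _, wlt _ _ hw⟩
    · exact hlo e' he'E e heE (vtx e'.2, wpt (wrap e')) (by simp [lowerIv, he't])
        (vtx e.2, wpt (wrap e)) (by simp [lowerIv, het])
        ⟨vlt _ _ h3, vw _ _, wlt _ _ hw⟩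
  · rintro e ⟨heE, het⟩ e' ⟨he'E, he't⟩ ⟨h1, h2, h3⟩
    have hne : e ≠ e' := by
      rintro rfl; exact lt_irrefl _ h1
    have hwne : wrap e ≠ wrap e' := fun hw =>
      hne (hinj e heE e' he'E (Or.inr het) (Or.inr he't) hw)
    rcases lt_or_gt_of_ne hwne with hw | hw
    · exact hlo e heE e' he'E (vtx e.1, wpt (wrap e)) (by simp [lowerIv, het])
        (vtx e'.1, wpt (wrap e')) (by simp [lowerIv, he't])
        ⟨vlt _ _ h1, vw _ _, wlt _ _ hw⟩
    · exact hup e' he'E e heE (vtx e'.2, wpt (wrap e')) (by simp [upperIv, he't])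
        (vtx e.2, wpt (wrap e)) (by simp [upperIv, het])
        ⟨vlt _ _ h3, vw _ _, wlt _ _ hw⟩

end DequePaper
end
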